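/- arXiv:1510.05948 — 12 statements merged into one kernel-verified Lean document; each statement's English description precedes it below -/
import Mathlib

section
/- Let n ≥ 1, let q be a positive integer, and let s, s' ∈ ℤⁿ with gcd(q, s₁, …, sₙ) = gcd(q, s'₁, …, s'ₙ) = 1. Set s_{n+1} = −(s₁ + ⋯ + sₙ) and s'_{n+1} = −(s'₁ + ⋯ + s'ₙ), let ξ_q = exp(2πi/q), and let γ_{q,s} = diag(ξ_q^{s₁}, …, ξ_q^{sₙ}, ξ_q^{s_{n+1}}) ∈ SU(n+1), and similarly γ_{q,s'}. Then the cyclic subgroups Γ_{q,s} = ⟨γ_{q,s}⟩ and Γ_{q,s'} = ⟨γ_{q,s'}⟩ are conjugate in SU(n+1) if and only if there exist a permutation σ of {1, …, n+1} and an integer ℓ coprime to q such that s_{σ(j)} ≡ ℓ s'_j (mod q) for all 1 ≤ j ≤ n+1. -/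
/-!
Conjugate diagonal matrices have the same characteristic polynomial, hence the same diagonal
entries up to a permutation; conversely a permutation matrix, with its determinant corrected by a
sign on one diagonal entry, conjugates a diagonal matrix to any reordering of it inside `SU(n+1)`.
On the group side, the cyclic monoids generated by `x` and by an element `y` of finite order `q`
coincide iff `x = y ^ ℓ` with `ℓ` prime to `q`, and `gcd(q, s') = 1` makes `γ'` of order
exactly `q`.
-/

open Matrix Finset

theorem Nat.exists_mul_modEq_one_of_coprime {a n : ℕ} (h : a.Coprime n) :
    ∃ b, a * b ≡ 1 [MOD n] := by
  rcases n with _ | n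
  · exact ⟨1, by rw [(Nat.coprime_zero_right a).1 h]⟩
  · refine ⟨((a : ZMod (n + 1))⁻¹).val, ?_⟩
    rw [← ZMod.natCast_eq_natCast_iff]
    push_cast [ZMod.natCast_zmod_val]
    exact ZMod.coe_mul_inv_eq_one a h

theorem Int.exists_natCast_modEq_coprime {ℓ : ℤ} {q : ℕ} (hq : q ≠ 0)
    (hℓ : ℓ.gcd q = 1) :
    ∃ m : ℕ, (m : ℤ) ≡ ℓ [ZMOD q] ∧ m.Coprime q := by
  have hr : 0 ≤ ℓ % q := Int.emod_nonneg ℓ (by exact_mod_cast hq)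
  refine ⟨(ℓ % q).toNat, ?_, ?_⟩
  · rw [Int.toNat_of_nonneg hr]
    exact Int.mod_modEq ℓ q
  · rw [Nat.Coprime, ← Int.gcd_natCast_natCast, Int.toNat_of_nonneg hr, Int.gcd_emod, hℓ]

theorem exists_perm_apply_eq_of_multiset_map_eq {ι α : Type*} [Fintype ι] {f g : ι → α}
    (h : univ.val.map f = univ.val.map g) : ∃ σ : Equiv.Perm ι, ∀ i, f (σ i) = g i := by
  classical
  have hfiber (a : α) : Fintype.card {i // g i = a} = Fintype.card {i // f i = a} := by
    have hcount := congrArg (Multiset.count a) h.symm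
    simp only [Multiset.count_map] at hcount
    simpa [Fintype.card_subtype, Finset.card_def, Finset.filter_val, eq_comm] using hcount
  exact ⟨Equiv.ofFiberEquiv fun a => Fintype.equivOfCardEq (hfiber a),
    Equiv.ofFiberEquiv_map _⟩

section Monoid

variable {M : Type*} [Monoid M]

theorem Units.image_conj_setOf_pow (u : Mˣ) (x : M) :
    (fun y => (u : M) * y * ↑u⁻¹) '' {y | ∃ k : ℕ, y = x ^ k} =
      {y | ∃ k : ℕ, y = ((u : M) * x * ↑u⁻¹) ^ k} := by
  ext y
  simp [Units.conj_pow, eq_comm]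

theorem IsOfFinOrder.setOf_pow_eq_setOf_pow_iff {x y : M} (hy : IsOfFinOrder y) :
    {z | ∃ k : ℕ, z = x ^ k} = {z | ∃ k : ℕ, z = y ^ k} ↔
      ∃ ℓ : ℕ, ℓ.Coprime (orderOf y) ∧ x = y ^ ℓ := by
  constructor
  · intro h
    obtain ⟨ℓ, rfl⟩ : x ∈ {z | ∃ k : ℕ, z = y ^ k} := h ▸ ⟨1, (pow_one x).symm⟩
    obtain ⟨m, hm⟩ : y ∈ {z | ∃ k : ℕ, z = (y ^ ℓ) ^ k} :=
      h ▸ ⟨1, (pow_one y).symm⟩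
    rw [← pow_mul] at hm
    nth_rw 1 [← pow_one y] at hm
    rw [hy.pow_eq_pow_iff_modEq] at hm
    exact ⟨ℓ, Nat.coprime_of_mul_modEq_one m hm.symm, rfl⟩
  · rintro ⟨ℓ, hℓ, rfl⟩
    obtain ⟨w, hw⟩ := Nat.exists_mul_modEq_one_of_coprime hℓ
    ext z
    constructor
    · rintro ⟨k, rfl⟩
      exact ⟨ℓ * k, (pow_mul y ℓ k).symm⟩
    · rintro ⟨k, rfl⟩
      refine ⟨w * k, ?_⟩
      rw [← pow_mul, ← mul_assoc]
      nth_rw 1 [← one_mul k]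
      rw [hy.pow_eq_pow_iff_modEq]
      simpa using (hw.mul_right k).symm

end Monoid

theorem IsPrimitiveRoot.zpow_eq_zpow_iff_modEq {G₀ : Type*} [CommGroupWithZero G₀] {ξ : G₀}
    {q : ℕ} (hξ : IsPrimitiveRoot ξ q) (hq : q ≠ 0) (a b : ℤ) :
    ξ ^ a = ξ ^ b ↔ a ≡ b [ZMOD q] := by
  have hξ0 : ξ ≠ 0 := hξ.ne_zero hq
  rw [Int.modEq_iff_dvd, ← hξ.zpow_eq_one_iff_dvd, zpow_sub₀ hξ0,
    div_eq_one_iff_eq (zpow_ne_zero _ hξ0), eq_comm]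

theorem Fin.univ_gcd_snoc_dvd {α : Type*} [CommMonoidWithZero α] [NormalizedGCDMonoid α]
    {n : ℕ} (s : Fin n → α) (x : α) :
    univ.gcd (Fin.snoc s x : Fin (n + 1) → α) ∣ univ.gcd s :=
  Finset.dvd_gcd fun i _ => by
    simpa using Finset.gcd_dvd (f := (Fin.snoc s x : Fin (n + 1) → α)) (mem_univ i.castSucc)

namespace Matrix

variable {ι : Type*} [Fintype ι] [DecidableEq ι]

theorem diagonal_zpow_pow {K : Type*} [DivisionRing K] (ξ : K) (t : ι → ℤ) (k : ℕ) :
    (diagonal fun i => ξ ^ t i) ^ k = diagonal fun i => ξ ^ (k * t i) := by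
  rw [diagonal_pow]
  congr 1
  ext i
  rw [Pi.pow_apply, mul_comm, _root_.zpow_mul, zpow_natCast]

section Field

variable {K : Type*} [Field K]

theorem orderOf_diagonal_zpow {ξ : K} {q : ℕ} (hξ : IsPrimitiveRoot ξ q) {t : ι → ℤ}
    (ht : IsCoprime (q : ℤ) (univ.gcd t)) : orderOf (diagonal fun i => ξ ^ t i) = q := by
  have hpow (k : ℕ) : (diagonal fun i => ξ ^ t i) ^ k = 1 ↔ q ∣ k := by
    rw [diagonal_zpow_pow, diagonal_eq_one, funext_iff]
    simp only [Pi.one_apply, hξ.zpow_eq_one_iff_dvd]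
    constructor
    · intro h
      have hgcd : (q : ℤ) ∣ normalize (k : ℤ) * univ.gcd t := by
        rw [← Finset.gcd_mul_left]
        exact Finset.dvd_gcd fun i _ => h i
      rw [Int.normalize_coe_nat] at hgcd
      exact_mod_cast ht.dvd_of_dvd_mul_right hgcd
    · intro h i
      exact Dvd.dvd.mul_right (by exact_mod_cast h) _
  exact Nat.dvd_antisymm (orderOf_dvd_of_pow_eq_one ((hpow q).2 dvd_rfl))
    ((hpow _).1 (pow_orderOf_eq_one _))

theorem exists_perm_apply_eq_of_conj_diagonal {g : Matrix ι ι K} (hg : IsUnit g.det)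
    {d e : ι → K} (h : g * diagonal d * g⁻¹ = diagonal e) :
    ∃ σ : Equiv.Perm ι, ∀ i, d (σ i) = e i := by
  have hchar : (g * diagonal d * g⁻¹).charpoly = (diagonal d).charpoly :=
    charpoly_units_conj (nonsingInvUnit g hg) _
  have hroots (f : ι → K) : (diagonal f).charpoly.roots = univ.val.map f := by
    rw [charpoly_diagonal, prod_eq_multiset_prod,
      ← Polynomial.roots_multiset_prod_X_sub_C (univ.val.map f), Multiset.map_map]
    rfl
  rw [h] at hchar
  exact exists_perm_apply_eq_of_multiset_map_eq (by rw [← hroots, ← hroots, hchar])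

end Field

theorem _root_.Equiv.Perm.permMatrix_mul_diagonal {R : Type*} [Semiring R] (σ : Equiv.Perm ι)
    (d : ι → R) : σ.permMatrix R * diagonal d = diagonal (d ∘ σ) * σ.permMatrix R := by
  ext i j
  simp only [Equiv.Perm.permMatrix, PEquiv.toMatrix_toPEquiv_mul, PEquiv.mul_toMatrix_toPEquiv]
  simp [diagonal_apply, Equiv.eq_symm_apply, eq_comm]

theorem _root_.Equiv.Perm.permMatrix_mem_unitaryGroup {R : Type*} [CommRing R] [StarRing R]
    (σ : Equiv.Perm ι) : σ.permMatrix R ∈ unitaryGroup ι R := by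
  rw [mem_unitaryGroup_iff', star_eq_conjTranspose, conjTranspose_permMatrix,
    ← permMatrix_mul, mul_inv_cancel, permMatrix_one]

theorem exists_mem_specialUnitaryGroup_mul_diagonal {R : Type*} [CommRing R] [StarRing R]
    [Nonempty ι] (σ : Equiv.Perm ι) (d : ι → R) :
    ∃ g ∈ specialUnitaryGroup ι R, g * diagonal d = diagonal (d ∘ σ) * g := by
  obtain ⟨i₀⟩ := ‹Nonempty ι›
  set s : R := ((Equiv.Perm.sign σ : ℤ) : R)
  have hs : s * s = 1 := by
    rw [← Int.cast_mul, ← Units.val_mul, Int.units_mul_self, Units.val_one, Int.cast_one]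
  let ε := Function.update (1 : ι → R) i₀ s
  have hε (i : ι) : star (ε i) * ε i = 1 := by
    rcases eq_or_ne i i₀ with rfl | hi
    · simp [ε, s, hs]
    · simp [ε, hi]
  refine ⟨σ.permMatrix R * diagonal ε, mem_specialUnitaryGroup_iff.2 ⟨?_, ?_⟩, ?_⟩
  · refine Submonoid.mul_mem _ σ.permMatrix_mem_unitaryGroup ?_
    rw [mem_unitaryGroup_iff', star_eq_conjTranspose, diagonal_conjTranspose,
      diagonal_mul_diagonal]
    simp only [Pi.star_apply, hε, diagonal_one]
  · rw [det_mul, det_permutation, det_diagonal, prod_update_of_mem (mem_univ i₀)]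
    simp [s, hs]
  · rw [mul_assoc, (commute_diagonal ε d).eq, ← mul_assoc, σ.permMatrix_mul_diagonal,
      mul_assoc]

end Matrix

theorem conjugate_cyclic_subgroups_SU_iff_general
    (n : ℕ) (q : ℕ) (hq : 0 < q) (s' : Fin n → ℤ)
    (hs' : Int.gcd (q : ℤ) (Finset.univ.gcd s') = 1)
    (sF sF' : Fin (n + 1) → ℤ)
    (hsF' : sF' = Fin.snoc s' (-(∑ i, s' i)))
    (ξ : ℂ) (hξ : ξ = Complex.exp (2 * Real.pi * Complex.I / q))
    (γ γ' : Matrix (Fin (n + 1)) (Fin (n + 1)) ℂ)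
    (hγ : γ = Matrix.diagonal fun i => ξ ^ sF i)
    (hγ' : γ' = Matrix.diagonal fun i => ξ ^ sF' i) :
    (∃ g : Matrix (Fin (n + 1)) (Fin (n + 1)) ℂ,
        g ∈ Matrix.specialUnitaryGroup (Fin (n + 1)) ℂ ∧
          (fun x => g * x * g⁻¹) '' {x | ∃ k : ℕ, x = γ ^ k} = {x | ∃ k : ℕ, x = γ' ^ k}) ↔
      ∃ (σ : Equiv.Perm (Fin (n + 1))) (ℓ : ℤ), Int.gcd ℓ (q : ℤ) = 1 ∧
        ∀ j, sF (σ j) ≡ ℓ * sF' j [ZMOD (q : ℤ)] := by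
  have hξq : IsPrimitiveRoot ξ q := hξ ▸ Complex.isPrimitiveRoot_exp q hq.ne'
  have hγ'q : orderOf γ' = q := by
    refine hγ' ▸ orderOf_diagonal_zpow hξq ?_
    exact (Int.isCoprime_iff_gcd_eq_one.2 hs').of_isCoprime_of_dvd_right
      (hsF' ▸ Fin.univ_gcd_snoc_dvd s' _)
  have hdet : ∀ g ∈ specialUnitaryGroup (Fin (n + 1)) ℂ, IsUnit g.det :=
    fun g hg => (mem_specialUnitaryGroup_iff.1 hg).2 ▸ isUnit_one
  have hconj : ∀ g ∈ specialUnitaryGroup (Fin (n + 1)) ℂ,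
      (fun x => g * x * g⁻¹) '' {x | ∃ k : ℕ, x = γ ^ k} =
          {x | ∃ k : ℕ, x = γ' ^ k} ↔
        ∃ ℓ : ℕ, ℓ.Coprime q ∧ g * γ * g⁻¹ = γ' ^ ℓ := fun g hg => by
    rw [← hγ'q, ← (orderOf_pos_iff.1 (hγ'q ▸ hq)).setOf_pow_eq_setOf_pow_iff]
    exact Eq.congr_left (Units.image_conj_setOf_pow (nonsingInvUnit g (hdet g hg)) γ)
  constructor
  · rintro ⟨g, hg, himage⟩
    obtain ⟨ℓ, hℓ, hgγ⟩ := (hconj g hg).1 himage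
    rw [hγ, hγ', diagonal_zpow_pow] at hgγ
    obtain ⟨σ, hσ⟩ := exists_perm_apply_eq_of_conj_diagonal (hdet g hg) hgγ
    exact ⟨σ, ℓ, by simpa using hℓ,
      fun j => (hξq.zpow_eq_zpow_iff_modEq hq.ne' _ _).1 (hσ j)⟩
  · rintro ⟨σ, ℓ, hℓ, hσ⟩
    obtain ⟨m, hmℓ, hm⟩ := Int.exists_natCast_modEq_coprime hq.ne' hℓ
    obtain ⟨g, hg, hgγ⟩ := exists_mem_specialUnitaryGroup_mul_diagonal σ fun i => ξ ^ sF i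
    refine ⟨g, hg, (hconj g hg).2 ⟨m, hm, ?_⟩⟩
    rw [hγ, hgγ, mul_nonsing_inv_cancel_right _ _ (hdet g hg), hγ', diagonal_zpow_pow]
    congr 1
    funext j
    exact (hξq.zpow_eq_zpow_iff_modEq hq.ne' _ _).2 ((hσ j).trans (hmℓ.symm.mul_right _))

/-- **Conjugacy of cyclic subgroups of SU(n+1).**
For `q ≥ 1` and `s, s' ∈ ℤⁿ` with `gcd(q, s) = gcd(q, s') = 1`, the cyclic subgroups of
`SU(n+1)` generated by the diagonal matrices `γ_{q,s} = diag(ξ^{s₁}, …, ξ^{sₙ}, ξ^{s_{n+1}})`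
and `γ_{q,s'}` (where `ξ = e^{2πi/q}` and `s_{n+1} = -(s₁+⋯+sₙ)`) are conjugate in `SU(n+1)`
iff `s_{σ(j)} ≡ ℓ s'_j (mod q)` for all `j`, for some permutation `σ` and some `ℓ` coprime
to `q`. -/
theorem conjugate_cyclic_subgroups_SU_iff
    (n : ℕ) (hn : 1 ≤ n) (q : ℕ) (hq : 0 < q) (s s' : Fin n → ℤ)
    (hs : Int.gcd (q : ℤ) (Finset.univ.gcd s) = 1)
    (hs' : Int.gcd (q : ℤ) (Finset.univ.gcd s') = 1)
    (sF sF' : Fin (n + 1) → ℤ)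
    (hsF : sF = Fin.snoc s (-(∑ i, s i)))
    (hsF' : sF' = Fin.snoc s' (-(∑ i, s' i)))
    (ξ : ℂ) (hξ : ξ = Complex.exp (2 * Real.pi * Complex.I / q))
    (γ γ' : Matrix (Fin (n + 1)) (Fin (n + 1)) ℂ)
    (hγ : γ = Matrix.diagonal fun i => ξ ^ sF i)
    (hγ' : γ' = Matrix.diagonal fun i => ξ ^ sF' i) :
    (∃ g : Matrix (Fin (n + 1)) (Fin (n + 1)) ℂ,
        g ∈ Matrix.specialUnitaryGroup (Fin (n + 1)) ℂ ∧
          (fun x => g * x * g⁻¹) '' {x | ∃ k : ℕ, x = γ ^ k} = {x | ∃ k : ℕ, x = γ' ^ k}) ↔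
      ∃ (σ : Equiv.Perm (Fin (n + 1))) (ℓ : ℤ), Int.gcd ℓ (q : ℤ) = 1 ∧
        ∀ j, sF (σ j) ≡ ℓ * sF' j [ZMOD (q : ℤ)] :=
  conjugate_cyclic_subgroups_SU_iff_general n q hq s' hs' sF sF' hsF' ξ hξ γ γ' hγ hγ'
end

section
/- Let n ≥ 1 and k ≥ 0 be integers, and let μ = (a₁, …, a_{n+1}) ∈ ℤ^{n+1} with a₁ ≥ a₂ ≥ ⋯ ≥ a_{n+1} and a₁ + ⋯ + a_{n+1} = 0. Set ‖μ‖₁ = |a₁| + ⋯ + |a_{n+1}| (an even integer). Let λ be the Young diagram with one row of length 2k followed by n−1 rows of length k. Then the number of semistandard Young tableaux of shape λ with entries in {1, …, n+1} in which the value i occurs exactly aᵢ + k times (for each 1 ≤ i ≤ n+1) equals the binomial coefficient C(k − ‖μ‖₁/2 + n − 1, n − 1) if ‖μ‖₁ ≤ 2k, and equals 0 if ‖μ‖₁ > 2k. -/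
/-!
In a tableau being counted, each of the first `k` columns holds `n` strictly increasing values
from `{0, …, n}`, so it is `{0, …, n}` with one value removed, and these missing values decrease
weakly along the row; the other `k` cells of the first row form a weakly increasing sequence.
If `M v` columns miss `v`, then `v` occurs `k - M v` times in the columns, hence `a v + M v`
times in the tail. Both sequences are recovered from their multiplicities, and a column missing
`0` would leave no room for the `a 0 + M 0 > 0` zeros of the tail, so `M 0 = 0`. Tableaux thus
correspond to `M` with `M 0 = 0`, `a v + M v ≥ 0` and `∑ M = k`; after subtracting the lower
bounds `max (-a v) 0`, whose total is `‖μ‖₁ / 2`, this is stars and bars for `n` parts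
summing to `k - ‖μ‖₁ / 2`.
-/

/-- The Young diagram with one row of length `2k` followed by `n - 1` rows of length `k`. -/
def hookShape (n k : ℕ) : YoungDiagram :=
  YoungDiagram.ofRowLens (2 * k :: List.replicate (n - 1) k) (by
    have hrep : ∀ m : ℕ, List.Pairwise (· ≥ ·) (List.replicate m k) := by
      intro m
      induction m with
      | zero => simp
      | succ m ih =>
        rw [List.replicate_succ]
        exact List.pairwise_cons.mpr ⟨fun b hb => (List.eq_of_mem_replicate hb).le, ih⟩
    exact (List.pairwise_cons.mpr
      ⟨fun b hb => by rw [List.eq_of_mem_replicate hb]; omega, hrep (n - 1)⟩).sortedGE)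

open Finset

theorem card_filter_range_reflect (K : ℕ) (p : ℕ → Prop) [DecidablePred p] :
    #{j ∈ range K | p (K - 1 - j)} = #{j ∈ range K | p j} := by
  simp only [card_filter]
  exact sum_range_reflect (fun j => if p j then 1 else 0) K

theorem lt_card_filter_range_iff {N i : ℕ} {p : ℕ → Prop} [DecidablePred p]
    (hp : ∀ u v, u ≤ v → v < N → p v → p u) (hi : i < N) :
    i < #{v ∈ range N | p v} ↔ p i := by
  constructor
  · intro h
    by_contra hpi
    have hsub : {v ∈ range N | p v} ⊆ range i := fun v hv => by
      simp only [mem_filter, mem_range] at hv ⊢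
      by_contra hvi
      exact hpi (hp i v (by omega) hv.1 hv.2)
    have := card_le_card hsub
    rw [card_range] at this
    omega
  · intro hpi
    have hsub : range (i + 1) ⊆ {v ∈ range N | p v} := fun u hu => by
      simp only [mem_filter, mem_range] at hu ⊢
      exact ⟨by omega, hp u i (by omega) hi hpi⟩
    have := card_le_card hsub
    rw [card_range] at this
    omega

theorem card_sum_eq_choose (N m : ℕ) :
    Nat.card {f : Fin N → ℕ // ∑ i, f i = m} = (N + m - 1).choose m := by
  rw [← Nat.card_congr (Sym.equivNatSumOfFintype (Fin N) m), Nat.card_eq_fintype_card,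
    Sym.card_sym_eq_choose, Fintype.card_fin]

theorem card_sum_eq_of_forall_le {ι : Type*} [Fintype ι] (b : ι → ℕ) (m : ℕ) :
    Nat.card {f : ι → ℕ // (∀ i, b i ≤ f i) ∧ ∑ i, f i = m} =
      if ∑ i, b i ≤ m then Nat.card {g : ι → ℕ // ∑ i, g i = m - ∑ i, b i} else 0 := by
  split_ifs with hb
  · exact Nat.card_congr
      { toFun f := ⟨f.1 - b, by
          simp only [Pi.sub_apply]
          rw [sum_tsub_distrib _ fun i _ => f.2.1 i, f.2.2]⟩
        invFun g := ⟨g.1 + b, fun i => by simp, by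
          simp only [Pi.add_apply]
          rw [sum_add_distrib, g.2]
          omega⟩
        left_inv f := Subtype.ext (funext fun i => by simp [Nat.sub_add_cancel (f.2.1 i)])
        right_inv g := Subtype.ext (funext fun i => by simp) }
  · have : IsEmpty {f : ι → ℕ // (∀ i, b i ≤ f i) ∧ ∑ i, f i = m} :=
      ⟨fun f => hb (f.2.2 ▸ sum_le_sum fun i _ => f.2.1 i)⟩
    exact Nat.card_of_isEmpty

theorem sum_natAbs_eq_two_mul_sum_toNat_neg {ι : Type*} (s : Finset ι) (a : ι → ℤ)
    (h : ∑ i ∈ s, a i = 0) : ∑ i ∈ s, (a i).natAbs = 2 * ∑ i ∈ s, (-a i).toNat := by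
  have key : ∀ i, ((a i).natAbs : ℤ) = a i + 2 * ((-a i).toNat : ℤ) := fun i => by omega
  have : ((∑ i ∈ s, (a i).natAbs : ℕ) : ℤ) = 2 * ∑ i ∈ s, ((-a i).toNat : ℤ) := by
    rw [Nat.cast_sum, sum_congr rfl fun i _ => key i, sum_add_distrib, h, zero_add, mul_sum]
  exact_mod_cast this

theorem zero_le_apply_zero_of_antitone {n : ℕ} {a : Fin (n + 1) → ℤ} (hmono : Antitone a)
    (hsum : ∑ v, a v = 0) : 0 ≤ a 0 := by
  have : 0 ≤ ((n + 1 : ℕ) : ℤ) * a 0 := by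
    simpa [hsum] using sum_le_sum fun v (_ : v ∈ univ) => hmono (Fin.zero_le v)
  exact nonneg_of_mul_nonneg_right this (by positivity)

section SortedSeq

variable {N : ℕ} (c : Fin N → ℕ)

def partialSum (v : ℕ) : ℕ := ∑ w : Fin N with w.val < v, c w

/-- The `r`-th term of the weakly increasing sequence in which each `v < N` occurs `c v` times. -/
def sortedSeq (r : ℕ) : ℕ := #{v ∈ range N | partialSum c (v + 1) ≤ r}

variable {c}

theorem partialSum_mono : Monotone (partialSum c) := fun u v huv =>
  sum_le_sum_of_subset (monotone_filter_right _ fun w _ (hw : w.val < u) => by omega)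

theorem partialSum_zero : partialSum c 0 = 0 := by
  simp [partialSum]

theorem partialSum_succ (v : Fin N) : partialSum c (v + 1) = partialSum c v + c v := by
  have : (univ.filter fun w : Fin N => w.val < v.val + 1)
      = insert v (univ.filter fun w : Fin N => w.val < v.val) := by
    ext w
    simp only [mem_filter, mem_univ, true_and, mem_insert, Fin.ext_iff]
    omega
  rw [partialSum, partialSum, this, sum_insert (by simp), add_comm]

theorem partialSum_of_le {v : ℕ} (hv : N ≤ v) : partialSum c v = ∑ w, c w := by
  rw [partialSum, filter_true_of_mem fun w _ => by omega]

theorem lt_sortedSeq_iff {v r : ℕ} (hv : v < N) :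
    v < sortedSeq c r ↔ partialSum c (v + 1) ≤ r :=
  lt_card_filter_range_iff (fun _ _ huv _ h => (partialSum_mono (by omega)).trans h) hv

theorem sortedSeq_le (r : ℕ) : sortedSeq c r ≤ N :=
  (card_filter_le _ _).trans (card_range N).le

theorem sortedSeq_mono : Monotone (sortedSeq c) := fun _ _ h =>
  card_le_card (monotone_filter_right _ fun _ _ hv => hv.trans h)

theorem sortedSeq_lt {r : ℕ} (hr : r < ∑ w, c w) : sortedSeq c r < N := by
  rcases Nat.eq_zero_or_pos N with rfl | hN
  · simp at hr
  · have := (lt_sortedSeq_iff (c := c) (r := r) (Nat.sub_lt hN one_pos)).not.mpr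
      (by rw [show N - 1 + 1 = N by omega, partialSum_of_le le_rfl]; omega)
    omega

theorem sortedSeq_eq_iff {r : ℕ} (v : Fin N) :
    sortedSeq c r = v ↔ partialSum c v ≤ r ∧ r < partialSum c (v + 1) := by
  have hv := lt_sortedSeq_iff (c := c) (r := r) v.is_lt
  obtain ⟨v, hvN⟩ := v
  cases v with
  | zero => simp only [partialSum_zero] at hv ⊢; omega
  | succ u =>
    have hu := lt_sortedSeq_iff (c := c) (r := r) (show u < N by omega)
    simp only at hv ⊢
    omega

theorem card_sortedSeq_eq (v : Fin N) : #{r ∈ range (∑ w, c w) | sortedSeq c r = v} = c v := by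
  have hle : partialSum c (v + 1) ≤ ∑ w, c w :=
    (partialSum_mono v.is_lt).trans (partialSum_of_le le_rfl).le
  have : {r ∈ range (∑ w, c w) | sortedSeq c r = v}
      = Ico (partialSum c v) (partialSum c (v + 1)) := by
    ext r
    simp only [mem_filter, mem_range, mem_Ico, sortedSeq_eq_iff]
    omega
  rw [this, Nat.card_Ico, partialSum_succ]
  omega

variable {K : ℕ} {s : ℕ → ℕ}

theorem partialSum_card_fiber (hs : ∀ r < K, s r < N) (u : ℕ) :
    partialSum (fun v : Fin N => #{r ∈ range K | s r = v}) u = #{r ∈ range K | s r < u} := by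
  rw [card_eq_sum_card_fiberwise (f := s) (t := {w ∈ range N | w < u}) fun r hr => by
    simp only [coe_filter, mem_range, Set.mem_ofPred_eq] at hr ⊢
    exact ⟨hs r hr.1, hr.2⟩]
  rw [partialSum, sum_filter, sum_filter,
    Fin.sum_univ_eq_sum_range (fun w => if w < u then #{r ∈ range K | s r = w} else 0)]
  refine sum_congr rfl fun w _ => ?_
  split_ifs with hw
  · rw [filter_filter]
    exact congrArg card (filter_congr fun r _ => by constructor <;> intro h <;> simp_all)
  · rfl

theorem sortedSeq_card_fiber (hmono : MonotoneOn s (Set.Iio K)) (hs : ∀ r < K, s r < N)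
    {r : ℕ} (hr : r < K) : sortedSeq (fun v : Fin N => #{r ∈ range K | s r = v}) r = s r := by
  set t := sortedSeq (fun v : Fin N => #{r ∈ range K | s r = v}) r
  have key : ∀ v < N, v < t ↔ v < s r := by
    intro v hv
    rw [lt_sortedSeq_iff hv, partialSum_card_fiber hs]
    have := lt_card_filter_range_iff (p := fun r' => s r' < v + 1)
      (fun _ _ h hK hlt => (hmono (by simp; omega) (by simpa) h).trans_lt hlt) hr
    omega
  have ht : t ≤ N := sortedSeq_le r
  have hsr := hs r hr
  rcases lt_trichotomy t (s r) with h | h | h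
  · exact absurd ((key _ (by omega)).mpr h) (lt_irrefl _)
  · exact h
  · exact absurd ((key _ hsr).mp h) (lt_irrefl _)

end SortedSeq

section HookShape

variable {n k : ℕ}

theorem mem_hookShape (hn : 1 ≤ n) {i j : ℕ} :
    (i, j) ∈ hookShape n k ↔ i < n ∧ j < k ∨ i = 0 ∧ j < 2 * k := by
  have hlen : (2 * k :: List.replicate (n - 1) k).length = n := by simp; omega
  rw [hookShape, YoungDiagram.mem_ofRowLens]
  cases i with
  | zero => simp; omega
  | succ i => simp [List.getElem_replicate]; omega

theorem cells_hookShape (hn : 1 ≤ n) :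
    (hookShape n k).cells = range n ×ˢ range k ∪ {0} ×ˢ Ico k (2 * k) := by
  ext ⟨i, j⟩
  simp only [YoungDiagram.mem_cells, mem_hookShape hn, mem_union, mem_product, mem_range,
    mem_Ico, mem_singleton]
  omega

/-- The entry in row `i` of the increasing column of height `n` filled with `{0, …, n} \ {m}`. -/
def missingColumn (m i : ℕ) : ℕ := if m ≤ i then i + 1 else i

theorem card_missingColumn_eq {m v : ℕ} (hm : m ≤ n) (hv : v ≤ n) :
    #{i ∈ range n | missingColumn m i = v} = if v = m then 0 else 1 := by
  rcases lt_trichotomy v m with h | rfl | h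
  · rw [if_neg h.ne, card_eq_one]
    exact ⟨v, by
      ext i
      simp only [mem_filter, mem_range, mem_singleton]
      simp only [missingColumn]
      split_ifs <;> omega⟩
  · rw [if_pos rfl, card_eq_zero, filter_eq_empty_iff]
    intro i _
    simp only [missingColumn]
    split_ifs <;> omega
  · rw [if_neg h.ne', card_eq_one]
    exact ⟨v - 1, by
      ext i
      simp only [mem_filter, mem_range, mem_singleton]
      simp only [missingColumn]
      split_ifs <;> omega⟩

theorem card_missingColumn_fixed {m : ℕ} (hm : m ≤ n) :
    #{i ∈ range n | missingColumn m i = i} = m := by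
  have : {i ∈ range n | missingColumn m i = i} = range m := by
    ext i
    simp only [mem_filter, mem_range]
    simp only [missingColumn]
    split_ifs <;> omega
  rw [this, card_range]

theorem card_filter_cells_hookShape (hn : 1 ≤ n) {E : ℕ → ℕ → ℕ} {m : ℕ → ℕ}
    (hm : ∀ j < k, m j ≤ n) (hE : ∀ i < n, ∀ j < k, E i j = missingColumn (m j) i)
    {v : ℕ} (hv : v ≤ n) :
    #{c ∈ (hookShape n k).cells | E c.1 c.2 = v} + #{j ∈ range k | m j = v}
      = k + #{r ∈ range k | E 0 (k + r) = v} := by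
  have hdisj : Disjoint (range n ×ˢ range k) ({0} ×ˢ Ico k (2 * k)) := by
    rw [disjoint_left]
    rintro ⟨i, j⟩ h1 h2
    simp only [mem_product, mem_range, mem_Ico] at h1 h2
    omega
  have hblock : #{c ∈ range n ×ˢ range k | E c.1 c.2 = v} + #{j ∈ range k | m j = v} = k := by
    have hcol : ∀ j ∈ range k, #{i ∈ range n | E i j = v} = if m j = v then 0 else 1 := by
      intro j hj
      rw [mem_range] at hj
      rw [filter_congr fun i hi => by rw [hE i (mem_range.mp hi) j hj],
        card_missingColumn_eq (hm j hj) hv]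
      simp only [eq_comm]
    rw [card_filter, sum_product_right]
    simp only [← card_filter]
    rw [sum_congr rfl hcol, sum_ite, sum_const_zero, zero_add, ← card_eq_sum_ones, add_comm,
      card_filter_add_card_filter_not, card_range]
  have htail :
      #{c ∈ {0} ×ˢ Ico k (2 * k) | E c.1 c.2 = v} = #{r ∈ range k | E 0 (k + r) = v} := by
    rw [card_filter, card_filter, sum_product, sum_singleton, sum_Ico_eq_sum_range,
      show 2 * k - k = k by omega]
  rw [cells_hookShape hn, filter_union, card_union_of_disjoint (disjoint_filter_filter hdisj)]
  omega

end HookShape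

namespace HookTableau

section Construction

variable {n : ℕ} (k : ℕ) (a : Fin (n + 1) → ℤ) (M : Fin (n + 1) → ℕ)

-- The missing values decrease along the row, hence the reflection `k - 1 - j`.
def colMissing (j : ℕ) : ℕ := sortedSeq M (k - 1 - j)

def tailMult (v : Fin (n + 1)) : ℕ := (a v + M v).toNat

def hookEntry (i j : ℕ) : ℕ :=
  if (i, j) ∈ hookShape n k then
    if j < k then missingColumn (colMissing k M j) i else sortedSeq (tailMult a M) (j - k)
  else 0

variable {k a M}

theorem colMissing_antitone : Antitone (colMissing k M) := fun _ _ h =>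
  sortedSeq_mono (by omega)

theorem one_le_colMissing (hM0 : M 0 = 0) (j : ℕ) : 1 ≤ colMissing k M j := by
  have h := lt_sortedSeq_iff (c := M) (r := k - 1 - j) (show 0 < n + 1 by omega)
  have h1 := partialSum_succ (c := M) 0
  simp only [Fin.val_zero, zero_add, partialSum_zero, hM0] at h h1
  rw [colMissing]
  omega

theorem colMissing_le (hMk : ∑ v, M v = k) {j : ℕ} (hj : j < k) : colMissing k M j ≤ n :=
  Nat.lt_succ_iff.mp (sortedSeq_lt (by omega))

theorem card_colMissing_eq (hMk : ∑ v, M v = k) (v : Fin (n + 1)) :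
    #{j ∈ range k | colMissing k M j = v} = M v :=
  calc #{j ∈ range k | colMissing k M j = v} = #{r ∈ range k | sortedSeq M r = v} :=
        card_filter_range_reflect k (fun r => sortedSeq M r = v)
    _ = M v := by rw [← card_sortedSeq_eq (c := M) v, hMk]

theorem sum_tailMult (hMa : ∀ v, 0 ≤ a v + M v) (hsum : ∑ v, a v = 0) (hMk : ∑ v, M v = k) :
    ∑ v, tailMult a M v = k := by
  have h : ((∑ v, tailMult a M v : ℕ) : ℤ) = ∑ v, (a v + M v) := by
    push_cast
    exact sum_congr rfl fun v _ => Int.toNat_of_nonneg (hMa v)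
  rw [sum_add_distrib, hsum, zero_add, ← Nat.cast_sum, hMk] at h
  exact_mod_cast h

theorem hookEntry_of_lt (hn : 1 ≤ n) {i j : ℕ} (hi : i < n) (hj : j < k) :
    hookEntry k a M i j = missingColumn (colMissing k M j) i := by
  rw [hookEntry, if_pos ((mem_hookShape hn).mpr (Or.inl ⟨hi, hj⟩)), if_pos hj]

theorem hookEntry_tail (hn : 1 ≤ n) {r : ℕ} (hr : r < k) :
    hookEntry k a M 0 (k + r) = sortedSeq (tailMult a M) r := by
  rw [hookEntry, if_pos ((mem_hookShape hn).mpr (Or.inr ⟨rfl, by omega⟩)), if_neg (by omega),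
    Nat.add_sub_cancel_left]

theorem hookEntry_row_weak (hn : 1 ≤ n) (hM0 : M 0 = 0) {i j₁ j₂ : ℕ} (hj : j₁ < j₂)
    (hcell : (i, j₂) ∈ hookShape n k) : hookEntry k a M i j₁ ≤ hookEntry k a M i j₂ := by
  rw [mem_hookShape hn] at hcell
  rcases lt_or_ge j₂ k with hj₂ | hj₂
  · rw [hookEntry_of_lt hn (by omega) (hj.trans hj₂), hookEntry_of_lt hn (by omega) hj₂]
    have := colMissing_antitone (k := k) (M := M) hj.le
    simp only [missingColumn]
    split_ifs <;> omega
  obtain ⟨rfl, -⟩ : i = 0 ∧ j₂ < 2 * k := by omega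
  obtain ⟨r₂, rfl⟩ := Nat.exists_eq_add_of_le hj₂
  rw [hookEntry_tail hn (by omega)]
  rcases lt_or_ge j₁ k with hj₁ | hj₁
  · have := one_le_colMissing (k := k) hM0 j₁
    rw [hookEntry_of_lt hn (by omega) hj₁, missingColumn, if_neg (by omega)]
    exact Nat.zero_le _
  · obtain ⟨r₁, rfl⟩ := Nat.exists_eq_add_of_le hj₁
    rw [hookEntry_tail hn (by omega)]
    exact sortedSeq_mono (by omega)

theorem hookEntry_col_strict (hn : 1 ≤ n) {i₁ i₂ j : ℕ} (hi : i₁ < i₂)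
    (hcell : (i₂, j) ∈ hookShape n k) : hookEntry k a M i₁ j < hookEntry k a M i₂ j := by
  rw [mem_hookShape hn] at hcell
  rw [hookEntry_of_lt hn (by omega) (by omega), hookEntry_of_lt hn (by omega) (by omega)]
  simp only [missingColumn]
  split_ifs <;> omega

variable (a) in
def hookTableau (hn : 1 ≤ n) (hM0 : M 0 = 0) : SemistandardYoungTableau (hookShape n k) where
  entry := hookEntry k a M
  row_weak' := hookEntry_row_weak hn hM0
  col_strict' := hookEntry_col_strict hn
  zeros' := fun h => by rw [hookEntry, if_neg h]

theorem hookTableau_apply (hn : 1 ≤ n) (hM0 : M 0 = 0) (i j : ℕ) :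
    hookTableau (k := k) a hn hM0 i j = hookEntry k a M i j := rfl

theorem hookEntry_lt (hn : 1 ≤ n) (hMa : ∀ v, 0 ≤ a v + M v) (hsum : ∑ v, a v = 0)
    (hMk : ∑ v, M v = k) {i j : ℕ} (hcell : (i, j) ∈ hookShape n k) :
    hookEntry k a M i j < n + 1 := by
  rw [mem_hookShape hn] at hcell
  rcases lt_or_ge j k with hj | hj
  · rw [hookEntry_of_lt hn (by omega) hj, missingColumn]
    split_ifs <;> omega
  · obtain ⟨r, rfl⟩ := Nat.exists_eq_add_of_le hj
    obtain rfl : i = 0 := by omega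
    rw [hookEntry_tail hn (by omega)]
    exact sortedSeq_lt (by rw [sum_tailMult hMa hsum hMk]; omega)

theorem card_hookEntry_eq (hn : 1 ≤ n) (hMa : ∀ v, 0 ≤ a v + M v) (hsum : ∑ v, a v = 0)
    (hMk : ∑ v, M v = k) (v : Fin (n + 1)) :
    (#{c ∈ (hookShape n k).cells | hookEntry k a M c.1 c.2 = v} : ℤ) = a v + k := by
  have hcount := card_filter_cells_hookShape hn (fun j hj => colMissing_le hMk hj)
    (fun i hi j hj => hookEntry_of_lt (a := a) hn hi hj) (Nat.lt_succ_iff.mp v.is_lt)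
  have htail : #{r ∈ range k | hookEntry k a M 0 (k + r) = v} = tailMult a M v := by
    rw [filter_congr fun r hr => by rw [hookEntry_tail hn (mem_range.mp hr)],
      ← card_sortedSeq_eq (c := tailMult a M) v, sum_tailMult hMa hsum hMk]
  rw [card_colMissing_eq hMk, htail, tailMult] at hcount
  have := hMa v
  omega

end Construction

section Recovery

variable {n k : ℕ} (T : SemistandardYoungTableau (hookShape n k))

def missingValue (j : ℕ) : ℕ := #{i ∈ range n | T i j = i}

def missingCount (v : Fin (n + 1)) : ℕ := #{j ∈ range k | missingValue T j = v}

theorem missingCount_hookTableau {a : Fin (n + 1) → ℤ} {M : Fin (n + 1) → ℕ} (hn : 1 ≤ n)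
    (hM0 : M 0 = 0) (hMk : ∑ v, M v = k) : missingCount (hookTableau (k := k) a hn hM0) = M := by
  have hcol : ∀ j < k, missingValue (hookTableau (k := k) a hn hM0) j = colMissing k M j := by
    intro j hj
    rw [missingValue, ← card_missingColumn_fixed (colMissing_le hMk hj)]
    exact congrArg card (filter_congr fun i hi => by
      rw [hookTableau_apply, hookEntry_of_lt hn (mem_range.mp hi) hj])
  funext v
  rw [missingCount, ← card_colMissing_eq hMk v]
  exact congrArg card (filter_congr fun j hj => by rw [hcol j (mem_range.mp hj)])

variable {T}

theorem entry_add_le (hn : 1 ≤ n) {j : ℕ} (hj : j < k) {i : ℕ} :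
    ∀ d, i + d < n → T i j + d ≤ T (i + d) j
  | 0, _ => le_rfl
  | d + 1, h => by
    have := entry_add_le hn hj (i := i) d (by omega)
    show T i j + (d + 1) ≤ T (i + d + 1) j
    have := T.col_strict (lt_add_one (i + d)) ((mem_hookShape hn).mpr (Or.inl ⟨h, hj⟩))
    omega

theorem le_entry (hn : 1 ≤ n) {i j : ℕ} (hi : i < n) (hj : j < k) : i ≤ T i j := by
  have := entry_add_le (T := T) hn hj (i := 0) i (by omega)
  rw [zero_add] at this
  omega

variable (hTb : ∀ c ∈ (hookShape n k).cells, T c.1 c.2 < n + 1)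
include hTb

theorem entry_le (hn : 1 ≤ n) {i j : ℕ} (hi : i < n) (hj : j < k) : T i j ≤ i + 1 := by
  have h1 := entry_add_le (T := T) hn hj (i := i) (n - 1 - i) (by omega)
  have h2 : T (n - 1) j < n + 1 :=
    hTb (n - 1, j) ((mem_hookShape hn).mpr (Or.inl ⟨by omega, hj⟩))
  rw [show i + (n - 1 - i) = n - 1 by omega] at h1
  omega

omit hTb in
theorem lt_missingValue_iff (hn : 1 ≤ n) {i j : ℕ} (hi : i < n) (hj : j < k) :
    i < missingValue T j ↔ T i j = i := by
  refine lt_card_filter_range_iff (fun u v huv hv hTv => ?_) hi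
  have := entry_add_le (T := T) hn hj (i := u) (v - u) (by omega)
  have := le_entry (T := T) hn (show u < n by omega) hj
  rw [show u + (v - u) = v by omega] at *
  omega

omit hTb in
theorem missingValue_le (j : ℕ) : missingValue T j ≤ n :=
  (card_filter_le _ _).trans (card_range n).le

theorem entry_eq_missingColumn (hn : 1 ≤ n) {i j : ℕ} (hi : i < n) (hj : j < k) :
    T i j = missingColumn (missingValue T j) i := by
  have := lt_missingValue_iff (T := T) hn hi hj
  have := le_entry (T := T) hn hi hj
  have := entry_le hTb hn hi hj
  rw [missingColumn]
  split_ifs <;> omega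

theorem missingValue_antitoneOn (hn : 1 ≤ n) : AntitoneOn (missingValue T) (Set.Iio k) := by
  intro j₁ hj₁ j₂ hj₂ h
  simp only [Set.mem_Iio] at hj₁ hj₂
  by_contra! hlt
  have hin : missingValue T j₁ < n := hlt.trans_le (missingValue_le j₂)
  have h₁ := entry_eq_missingColumn hTb hn hin hj₁
  have h₂ := (lt_missingValue_iff hn hin hj₂).mp hlt
  have := T.row_weak_of_le h ((mem_hookShape hn).mpr (Or.inl ⟨hin, hj₂⟩))
  rw [missingColumn, if_pos le_rfl] at h₁
  omega

omit hTb in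
theorem tail_monotoneOn (hn : 1 ≤ n) : MonotoneOn (fun r => T 0 (k + r)) (Set.Iio k) := by
  intro r₁ _ r₂ hr₂ h
  exact T.row_weak_of_le (by omega)
    ((mem_hookShape hn).mpr (Or.inr ⟨rfl, by simp at hr₂; omega⟩))

theorem tail_lt (hn : 1 ≤ n) {r : ℕ} (hr : r < k) : T 0 (k + r) < n + 1 :=
  hTb (0, k + r) ((mem_hookShape hn).mpr (Or.inr ⟨rfl, by omega⟩))

omit hTb in
theorem sum_missingCount : ∑ v, missingCount T v = k := by
  calc ∑ v, missingCount T v = ∑ w ∈ range (n + 1), #{j ∈ range k | missingValue T j = w} :=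
        Fin.sum_univ_eq_sum_range (fun w => #{j ∈ range k | missingValue T j = w}) (n + 1)
    _ = k := by
      rw [← card_eq_sum_card_fiberwise fun j _ => by
        simpa using Nat.lt_succ_of_le (missingValue_le j), card_range]

theorem colMissing_missingCount (hn : 1 ≤ n) {j : ℕ} (hj : j < k) :
    colMissing k (missingCount T) j = missingValue T j := by
  have hfib : missingCount T =
      fun v : Fin (n + 1) => #{r ∈ range k | missingValue T (k - 1 - r) = v} :=
    funext fun v => (card_filter_range_reflect k (fun j => missingValue T j = v)).symm
  have hmono : MonotoneOn (fun r => missingValue T (k - 1 - r)) (Set.Iio k) :=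
    fun r₁ _ r₂ _ h =>
      missingValue_antitoneOn hTb hn (by simp; omega) (by simp; omega) (by omega)
  rw [colMissing, hfib, sortedSeq_card_fiber hmono
    (fun r _ => Nat.lt_succ_of_le (missingValue_le _)) (by omega : k - 1 - j < k)]
  congr 1
  omega

variable {a : Fin (n + 1) → ℤ}
  (hTw : ∀ v : Fin (n + 1), (#{c ∈ (hookShape n k).cells | T c.1 c.2 = v} : ℤ) = a v + k)
include hTw

theorem card_tail_eq (hn : 1 ≤ n) (v : Fin (n + 1)) :
    (#{r ∈ range k | T 0 (k + r) = v} : ℤ) = a v + missingCount T v := by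
  have := card_filter_cells_hookShape hn (fun j _ => missingValue_le j)
    (fun i hi j hj => entry_eq_missingColumn hTb hn hi hj) (Nat.lt_succ_iff.mp v.is_lt)
  have := hTw v
  simp only [missingCount]
  omega

-- A column missing `0` has `1` on top, and then so does column `k - 1`; the row being weakly
-- increasing, no `0` is left for the tail, which must hold `a 0 + missingCount T 0 > 0` of them.
theorem missingCount_zero (hn : 1 ≤ n) (ha0 : 0 ≤ a 0) : missingCount T 0 = 0 := by
  by_contra h
  obtain ⟨j, hj, hj0⟩ := filter_nonempty_iff.mp (card_ne_zero.mp h)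
  rw [mem_range] at hj
  have hlast : missingValue T (k - 1) = 0 := by
    have := missingValue_antitoneOn hTb hn hj (show k - 1 < k by omega) (by omega)
    simp only [Fin.val_zero] at hj0
    omega
  have h₁ : T 0 (k - 1) = 1 := by
    rw [entry_eq_missingColumn hTb hn (by omega) (by omega), hlast, missingColumn, if_pos le_rfl]
  have htail : #{r ∈ range k | T 0 (k + r) = (0 : Fin (n + 1))} = 0 := by
    refine card_eq_zero.mpr (filter_eq_empty_iff.mpr fun r hr => ?_)
    have := T.row_weak (show k - 1 < k + r by omega)
      ((mem_hookShape hn).mpr (Or.inr ⟨rfl, by simp at hr; omega⟩))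
    simp only [Fin.val_zero]
    omega
  have := card_tail_eq hTb hTw hn 0
  omega

theorem tailMult_missingCount (hn : 1 ≤ n) :
    tailMult a (missingCount T) = fun v : Fin (n + 1) => #{r ∈ range k | T 0 (k + r) = v} :=
  funext fun v => by rw [tailMult, ← card_tail_eq hTb hTw hn v, Int.toNat_natCast]

theorem hookTableau_missingCount (hn : 1 ≤ n) (ha0 : 0 ≤ a 0) :
    hookTableau a hn (missingCount_zero hTb hTw hn ha0) = T := by
  refine SemistandardYoungTableau.ext fun i j => ?_
  rw [hookTableau_apply]
  by_cases hc : (i, j) ∈ hookShape n k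
  · have hc' := (mem_hookShape hn).mp hc
    rcases lt_or_ge j k with hj | hj
    · have hi : i < n := by omega
      rw [hookEntry_of_lt hn hi hj, colMissing_missingCount hTb hn hj,
        entry_eq_missingColumn hTb hn hi hj]
    · obtain ⟨r, rfl⟩ := Nat.exists_eq_add_of_le hj
      obtain rfl : i = 0 := by omega
      rw [hookEntry_tail hn (by omega), tailMult_missingCount hTb hTw hn,
        sortedSeq_card_fiber (tail_monotoneOn hn) (fun r hr => tail_lt hTb hn hr) (by omega)]
  · rw [hookEntry, if_neg hc, T.zeros hc]

end Recovery


def weightTableaux (n k : ℕ) (a : Fin (n + 1) → ℤ) :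
    Set (SemistandardYoungTableau (hookShape n k)) :=
  {T | (∀ c ∈ (hookShape n k).cells, T c.1 c.2 < n + 1) ∧
    ∀ v : Fin (n + 1), (#{c ∈ (hookShape n k).cells | T c.1 c.2 = v} : ℤ) = a v + k}

/-- `M v` is the number of the first `k` columns that miss the value `v`. -/
def admissibleCounts {n : ℕ} (k : ℕ) (a : Fin (n + 1) → ℤ) : Set (Fin (n + 1) → ℕ) :=
  {M | M 0 = 0 ∧ (∀ v, 0 ≤ a v + M v) ∧ ∑ v, M v = k}

def weightTableauxEquiv {n k : ℕ} {a : Fin (n + 1) → ℤ} (hn : 1 ≤ n) (ha0 : 0 ≤ a 0)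
    (hsum : ∑ v, a v = 0) : weightTableaux n k a ≃ admissibleCounts k a where
  toFun T := ⟨missingCount T.1, missingCount_zero T.2.1 T.2.2 hn ha0,
    fun v => by have := card_tail_eq T.2.1 T.2.2 hn v; omega, sum_missingCount⟩
  invFun M := ⟨hookTableau a hn M.2.1, fun _ hc => hookEntry_lt hn M.2.2.1 hsum M.2.2.2 hc,
    card_hookEntry_eq hn M.2.2.1 hsum M.2.2.2⟩
  left_inv T := Subtype.ext (hookTableau_missingCount T.2.1 T.2.2 hn ha0)
  right_inv M := Subtype.ext (missingCount_hookTableau hn M.2.1 M.2.2.2)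

def admissibleCountsEquiv {n k : ℕ} {a : Fin (n + 1) → ℤ} (ha0 : 0 ≤ a 0) :
    admissibleCounts k a ≃
      {f : Fin n → ℕ // (∀ i, (-a i.succ).toNat ≤ f i) ∧ ∑ i, f i = k} where
  toFun M := ⟨Fin.tail M.1, fun i => by have := M.2.2.1 i.succ; simp [Fin.tail]; omega,
    by have := M.2.2.2; rwa [Fin.sum_univ_succ, M.2.1, zero_add] at this⟩
  invFun f := ⟨Fin.cons 0 f.1, rfl, Fin.cases (by simpa using ha0) fun i => by
      have := f.2.1 i
      simp only [Fin.cons_succ]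
      omega, by rw [Fin.sum_univ_succ]; simpa using f.2.2⟩
  left_inv M := Subtype.ext (by simp [← M.2.1])
  right_inv f := Subtype.ext (by simp)

theorem card_admissibleCounts {n k : ℕ} {a : Fin (n + 1) → ℤ} (hn : 1 ≤ n)
    (ha0 : 0 ≤ a 0) :
    Nat.card (admissibleCounts k a) =
      if ∑ v, (-a v).toNat ≤ k then (k - ∑ v, (-a v).toNat + (n - 1)).choose (n - 1)
      else 0 := by
  have hb : ∑ i : Fin n, (-a i.succ).toNat = ∑ v, (-a v).toNat := by
    rw [Fin.sum_univ_succ (f := fun v => (-a v).toNat)]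
    omega
  rw [Nat.card_congr (admissibleCountsEquiv ha0), card_sum_eq_of_forall_le, hb]
  split_ifs
  · rw [card_sum_eq_choose, ← Nat.choose_symm_add]
    congr 1
    omega
  · rfl

end HookTableau

/-- **Weight multiplicities for `SU(n+1)` spherical representations as Kostka numbers.**
Let `μ = (a₁, …, a_{n+1})` be a weakly decreasing integer vector summing to `0`.  The number
of semistandard Young tableaux of shape `(2k, k, …, k)` (with `n - 1` rows of length `k`)
with entries in `{0, …, n}` in which the value `i` occurs exactly `aᵢ + k` times equals
`C(k - ‖μ‖₁/2 + n - 1, n - 1)` if `‖μ‖₁ ≤ 2k`, and `0` otherwise, where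
`‖μ‖₁ = |a₁| + ⋯ + |a_{n+1}|`. -/
theorem kostka_count_hookShape (n k : ℕ) (hn : 1 ≤ n) (a : Fin (n + 1) → ℤ)
    (hmono : Antitone a) (hsum : ∑ i, a i = 0) :
    Set.ncard {T : SemistandardYoungTableau (hookShape n k) |
        (∀ c ∈ (hookShape n k).cells, T c.1 c.2 < n + 1) ∧
          ∀ v : Fin (n + 1),
            ((((hookShape n k).cells).filter fun c => T c.1 c.2 = (v : ℕ)).card : ℤ)
              = a v + k} =
      if (∑ i, (a i).natAbs) ≤ 2 * k then
        Nat.choose (k - (∑ i, (a i).natAbs) / 2 + (n - 1)) (n - 1)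
      else 0 := by
  have ha0 := zero_le_apply_zero_of_antitone hmono hsum
  rw [sum_natAbs_eq_two_mul_sum_toNat_neg _ _ hsum, Nat.mul_div_cancel_left _ two_pos,
    ← Nat.card_coe_set_eq]
  change Nat.card (HookTableau.weightTableaux n k a) = _
  rw [Nat.card_congr (HookTableau.weightTableauxEquiv hn ha0 hsum),
    HookTableau.card_admissibleCounts hn ha0]
  simp only [Nat.mul_le_mul_left_iff two_pos]
end

section
/- Let n ≥ 1, let q be a positive integer, and let s ∈ ℤⁿ with gcd(q, s₁, …, sₙ) = 1. For k ≥ 0 let N(k) = #{(a₁, …, aₙ) ∈ ℤⁿ : a₁s₁ + ⋯ + aₙsₙ ≡ 0 (mod q) and |a₁| + ⋯ + |aₙ| = k}, and let θ(z) = Σ_{k≥0} N(k) z^k as a formal power series over ℤ. Then there exists a polynomial p(z) with integer coefficients of degree strictly less than (n+1)q such that (1 − z^q)^{n+1} · θ(z) = (1 − z) · p(z) as formal power series. -/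
/-!
Splitting off the first coordinate `m` of a lattice point writes `θ_{s,u}` as
`∑_{m ∈ ℤ} z^|m| θ_{s',u - m s₁}`, where `s'` drops `s₁`. Since `θ_{s',v}` only depends
on `v mod q`, each residue class of `m` contributes a geometric series in `z^q`, so
`(1 - z^q) θ_{s,u}` is a combination of the `z^r θ_{s',v}` with `r ≤ q`. By induction
`(1 - z^q)^n θ_{s,u}` is a polynomial of degree `≤ nq`, and the remaining factor `1 - z^q`
is divisible by `1 - z`.
-/

open PowerSeries Finset
open scoped Polynomial

section SumXPowMul

variable {R : Type*} [CommSemiring R]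

/-- The `X`-adically convergent sum `∑ m, X ^ m * F m`. -/
noncomputable def sumXPowMul (F : ℕ → R⟦X⟧) : R⟦X⟧ :=
  mk fun k => ∑ m ∈ range (k + 1), coeff (k - m) (F m)

lemma sumXPowMul_eq_add_X_mul (F : ℕ → R⟦X⟧) :
    sumXPowMul F = F 0 + X * sumXPowMul fun m => F (m + 1) := by
  ext (_ | k)
  · simp [sumXPowMul]
  · rw [sumXPowMul, coeff_mk, sum_range_succ', map_add, coeff_succ_X_mul, sumXPowMul, coeff_mk]
    simp [add_comm]

lemma sumXPowMul_eq_sum_add_X_pow_mul (F : ℕ → R⟦X⟧) (q : ℕ) :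
    sumXPowMul F = ∑ m ∈ range q, X ^ m * F m + X ^ q * sumXPowMul fun m => F (m + q) := by
  induction q with
  | zero => simp
  | succ q ih =>
    rw [ih, sumXPowMul_eq_add_X_mul fun m => F (m + q), sum_range_succ]
    simp only [zero_add, add_assoc, add_comm 1 q, pow_succ]
    ring

end SumXPowMul

lemma one_sub_X_pow_mul_sumXPowMul {R : Type*} [CommRing R] {F : ℕ → R⟦X⟧} {q : ℕ}
    (hF : ∀ m, F (m + q) = F m) :
    (1 - X ^ q) * sumXPowMul F = ∑ m ∈ range q, X ^ m * F m := by
  have h := sumXPowMul_eq_sum_add_X_pow_mul F q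
  simp only [hF] at h
  linear_combination h

lemma Finset.sum_Icc_neg_natCast {M : Type*} [AddCommGroup M] (f : ℤ → M) (k : ℕ) :
    ∑ m ∈ Icc (-(k : ℤ)) k, f m =
      ∑ j ∈ range (k + 1), f (j : ℤ) + ∑ j ∈ range k, f (-(j + 1 : ℤ)) := by
  induction k with
  | zero => simp
  | succ k ih =>
    rw [Nat.cast_succ, sum_Icc_succ_eq_add_endpoints, ih, sum_range_succ _ (k + 1),
      sum_range_succ (fun j : ℕ => f (-(j + 1 : ℤ))) k]
    push_cast
    abel

@[norm_cast]
lemma Polynomial.coe_sum {R ι : Type*} [Semiring R] (t : Finset ι) (f : ι → R[X]) :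
    ((∑ i ∈ t, f i : R[X]) : R⟦X⟧) = ∑ i ∈ t, (f i : R⟦X⟧) :=
  map_sum Polynomial.coeToPowerSeries.ringHom f t

namespace CongruenceLattice

variable (q : ℕ) {n : ℕ}

/-- The points of `L_{q,s,u}` of one-norm `k`; the box `[-k, k]ⁿ` only makes finiteness
visible, see `mem_sphere`. -/
noncomputable def sphere (s : Fin n → ℤ) (u : ℤ) (k : ℕ) : Finset (Fin n → ℤ) :=
  {a ∈ Fintype.piFinset fun _ => Icc (-(k : ℤ)) k |
    ∑ i, a i * s i ≡ u [ZMOD q] ∧ ∑ i, (a i).natAbs = k}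

variable {q}

lemma mem_sphere {s : Fin n → ℤ} {u : ℤ} {k : ℕ} {a : Fin n → ℤ} :
    a ∈ sphere q s u k ↔ ∑ i, a i * s i ≡ u [ZMOD q] ∧ ∑ i, (a i).natAbs = k := by
  simp only [sphere, mem_filter, Fintype.mem_piFinset, mem_Icc, and_iff_right_iff_imp]
  rintro ⟨-, hk⟩ i
  have := hk ▸ single_le_sum (fun j _ => Nat.zero_le (a j).natAbs) (mem_univ i)
  omega

lemma sphere_congr (s : Fin n → ℤ) {u u' : ℤ} (h : u ≡ u' [ZMOD q]) (k : ℕ) :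
    sphere q s u k = sphere q s u' k := by
  ext a
  simp only [mem_sphere]
  exact and_congr_left' ⟨(·.trans h), (·.trans h.symm)⟩

lemma card_sphere_fin_succ (s : Fin (n + 1) → ℤ) (u : ℤ) (k : ℕ) :
    #(sphere q s u k) =
      ∑ m ∈ Icc (-(k : ℤ)) k, #(sphere q (Fin.tail s) (u - m * s 0) (k - m.natAbs)) := by
  have modEq_iff (x y : ℤ) : x + y ≡ u [ZMOD q] ↔ y ≡ u - x [ZMOD q] := by
    rw [Int.modEq_iff_dvd, Int.modEq_iff_dvd, sub_sub]
  rw [← card_sigma]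
  refine card_bij' (fun a _ => ⟨a 0, Fin.tail a⟩) (fun p _ => Fin.cons p.1 p.2) ?_ ?_
    (fun a _ => Fin.cons_self_tail a) (fun p _ => by simp)
  · intro a ha
    rw [mem_sphere, Fin.sum_univ_succ, Fin.sum_univ_succ, modEq_iff] at ha
    simp only [mem_sigma, mem_Icc, mem_sphere]
    refine ⟨by omega, ha.1, by simp only [Fin.tail]; omega⟩
  · rintro ⟨m, b⟩ hp
    simp only [mem_sigma, mem_Icc, mem_sphere] at hp
    rw [mem_sphere, Fin.sum_univ_succ, Fin.sum_univ_succ, modEq_iff]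
    simp only [Fin.cons_zero, Fin.cons_succ]
    exact ⟨hp.2.1, by omega⟩

variable (q)

noncomputable def theta (s : Fin n → ℤ) (u : ℤ) : ℤ⟦X⟧ :=
  mk fun k => #(sphere q s u k)

variable {q}

lemma theta_congr (s : Fin n → ℤ) {u u' : ℤ} (h : u ≡ u' [ZMOD q]) :
    theta q s u = theta q s u' := by
  simp only [theta, sphere_congr s h]

lemma theta_fin_succ (s : Fin (n + 1) → ℤ) (u : ℤ) :
    theta q s u = sumXPowMul (fun m => theta q (Fin.tail s) (u - m * s 0)) +
      X * sumXPowMul fun m => theta q (Fin.tail s) (u + (m + 1) * s 0) := by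
  ext k
  rw [map_add, theta, coeff_mk, card_sphere_fin_succ, Nat.cast_sum, Finset.sum_Icc_neg_natCast]
  congr 1
  · simp [sumXPowMul, theta]
  · cases k with
    | zero => simp
    | succ k =>
      simp only [coeff_succ_X_mul, sumXPowMul, theta, coeff_mk]
      refine sum_congr rfl fun j _ => ?_
      have hnatAbs : (-((j : ℤ) + 1)).natAbs = j + 1 := by omega
      rw [hnatAbs, Nat.add_sub_add_right, neg_mul, sub_neg_eq_add]

lemma one_sub_X_pow_mul_theta_fin_succ (s : Fin (n + 1) → ℤ) (u : ℤ) :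
    (1 - X ^ q) * theta q s u = ∑ m ∈ range q, X ^ m *
      (theta q (Fin.tail s) (u - m * s 0) + X * theta q (Fin.tail s) (u + (m + 1) * s 0)) := by
  rw [theta_fin_succ, mul_add, mul_left_comm,
    one_sub_X_pow_mul_sumXPowMul fun m =>
      theta_congr _ (Int.modEq_iff_dvd.2 ⟨s 0, by push_cast; ring⟩),
    one_sub_X_pow_mul_sumXPowMul fun m =>
      theta_congr _ (Int.modEq_iff_dvd.2 ⟨-s 0, by push_cast; ring⟩),
    mul_sum, ← sum_add_distrib]
  exact sum_congr rfl fun m _ => by ring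

variable (q)

theorem exists_natDegree_le_one_sub_X_pow_pow_mul_theta (s : Fin n → ℤ) (u : ℤ) :
    ∃ Q : ℤ[X], Q.natDegree ≤ n * q ∧ (1 - X ^ q) ^ n * theta q s u = (Q : ℤ⟦X⟧) := by
  induction n generalizing u with
  | zero =>
    refine ⟨Polynomial.C (#(sphere q s u 0) : ℤ), by simp, ?_⟩
    ext (_ | k)
    · simp [theta]
    · simp [theta, sphere]
  | succ n ih =>
    choose Q hQdeg hQ using ih (Fin.tail s)
    refine ⟨∑ m ∈ range q, (Polynomial.X ^ m * Q (u - m * s 0) +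
      Polynomial.X ^ (m + 1) * Q (u + (m + 1) * s 0)), ?_, ?_⟩
    · have hterm (j : ℕ) (hj : j ≤ q) (v : ℤ) :
          (Polynomial.X ^ j * Q v).natDegree ≤ (n + 1) * q :=
        calc _ ≤ j + n * q := Polynomial.natDegree_mul_le.trans
              (add_le_add (Polynomial.natDegree_X_pow_le j) (hQdeg v))
          _ ≤ (n + 1) * q := by rw [Nat.succ_mul]; omega
      refine Polynomial.natDegree_sum_le_of_forall_le _ _ fun m hm => ?_
      rw [mem_range] at hm
      exact Polynomial.natDegree_add_le_of_degree_le (hterm m hm.le _) (hterm (m + 1) hm _)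
    · rw [pow_succ, mul_assoc, one_sub_X_pow_mul_theta_fin_succ, mul_sum]
      push_cast
      exact sum_congr rfl fun m _ => by rw [← hQ, ← hQ]; ring

lemma ncard_eq_card_sphere_zero (s : Fin n → ℤ) (k : ℕ) :
    {a : Fin n → ℤ | (q : ℤ) ∣ ∑ i, a i * s i ∧ ∑ i, (a i).natAbs = k}.ncard =
      #(sphere q s 0 k) := by
  rw [← Set.ncard_coe_finset]
  congr
  ext a
  simp [mem_sphere, Int.modEq_zero_iff_dvd]

end CongruenceLattice

theorem theta_congruence_lattice_rational_general
    (n : ℕ) (q : ℕ) (hq : 0 < q) (s : Fin n → ℤ)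
    (N : ℕ → ℕ)
    (hN : ∀ k, N k = Set.ncard {a : Fin n → ℤ |
        (q : ℤ) ∣ (∑ i, a i * s i) ∧ (∑ i, (a i).natAbs) = k})
    (θ : PowerSeries ℤ) (hθ : θ = PowerSeries.mk fun k => (N k : ℤ)) :
    ∃ p : Polynomial ℤ, p.degree < ((n + 1) * q : ℕ) ∧
      (1 - PowerSeries.X ^ q) ^ (n + 1) * θ = (1 - PowerSeries.X) * (p : PowerSeries ℤ) := by
  have hθ_eq : θ = CongruenceLattice.theta q s 0 := by
    ext k
    rw [hθ, coeff_mk, hN, CongruenceLattice.ncard_eq_card_sphere_zero, CongruenceLattice.theta,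
      coeff_mk]
  obtain ⟨Q, hQdeg, hQ⟩ :=
    CongruenceLattice.exists_natDegree_le_one_sub_X_pow_pow_mul_theta q s 0
  refine ⟨(∑ i ∈ range q, Polynomial.X ^ i) * Q, ?_, ?_⟩
  · have hgeom : (∑ i ∈ range q, Polynomial.X ^ i : ℤ[X]).natDegree ≤ q - 1 :=
      Polynomial.natDegree_sum_le_of_forall_le _ _ fun i hi =>
        (Polynomial.natDegree_X_pow_le i).trans (by rw [mem_range] at hi; omega)
    have hlt : ((∑ i ∈ range q, Polynomial.X ^ i) * Q).natDegree < (n + 1) * q :=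
      calc _ ≤ (q - 1) + n * q := Polynomial.natDegree_mul_le.trans (add_le_add hgeom hQdeg)
        _ < (n + 1) * q := by rw [Nat.succ_mul]; omega
    exact Polynomial.degree_le_natDegree.trans_lt (by exact_mod_cast hlt)
  · rw [pow_succ', mul_assoc, hθ_eq, hQ, ← mul_neg_geom_sum]
    push_cast
    ring

/-- **Ehrhart-type rationality of the generating theta function of a congruence lattice.**
Let `L_{q,s} = {a ∈ ℤⁿ : Σᵢ aᵢsᵢ ≡ 0 (mod q)}` with `gcd(q, s₁, …, sₙ) = 1`, let
`N(k) = #{a ∈ L_{q,s} : ‖a‖₁ = k}` and `θ(z) = Σ_k N(k) z^k`.  Then there is an integer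
polynomial `p` of degree `< (n+1)q` with `(1 - z^q)^{n+1} θ(z) = (1 - z) p(z)`. -/
theorem theta_congruence_lattice_rational
    (n : ℕ) (hn : 1 ≤ n) (q : ℕ) (hq : 0 < q) (s : Fin n → ℤ)
    (hs : Int.gcd (q : ℤ) (Finset.univ.gcd s) = 1)
    (N : ℕ → ℕ)
    (hN : ∀ k, N k = Set.ncard {a : Fin n → ℤ |
        (q : ℤ) ∣ (∑ i, a i * s i) ∧ (∑ i, (a i).natAbs) = k})
    (θ : PowerSeries ℤ) (hθ : θ = PowerSeries.mk fun k => (N k : ℤ)) :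
    ∃ p : Polynomial ℤ, p.degree < ((n + 1) * q : ℕ) ∧
      (1 - PowerSeries.X ^ q) ^ (n + 1) * θ = (1 - PowerSeries.X) * (p : PowerSeries ℤ) :=
  theta_congruence_lattice_rational_general n q hq s N hN θ hθ
end

section
/- Let q be a positive integer and let s = (s₁, s₂) ∈ ℤ² with gcd(q, s₁, s₂) = 1. Let L = {(a, b) ∈ ℤ² : a + b ≡ 0 (mod 2) and a s₁ + b s₂ ≡ 0 (mod q)}. For k ≥ 0 let N(k) = #{(a, b) ∈ L : max(|a|, |b|) = k}, and let θ(z) = Σ_{k≥0} N(k) z^k as a formal power series over ℤ. Then there exists a polynomial p(z) with integer coefficients of degree strictly less than 3q such that (1 − z^q)³ · θ(z) = (1 − z) · p(z) as formal power series. -/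
/-!
Membership in `L` depends only on the residues of `(a, b)` modulo `2q`, and is invariant under
translation by `(q, q)`. Sorting the points of `L` in the box `[-m, m]²` by residue class writes
their number as `M(m) = ∑ e(r₁, m) e(r₂, m)`, the sum over the residue pairs `r` of `L`, where
`e(r, m)` counts the integers `≡ r (mod 2q)` in `[-m, m]`. Since `[-(m+q), m+q]` is `[-m, m]`
shifted by `-q` together with one full period `(m-q, m+q]`, we get `e(r, m + q) = e(r + q, m) + 1`,
and the `(q, q)`-invariance of `L` then makes `k ↦ M(m + kq)` a quadratic polynomial in `k`.
So the third `q`-difference of `M` vanishes, i.e. `(1 - X^q)³ ∑ M(m) X^m` is a polynomial of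
degree `< 3q`; and `θ = (1 - X) ∑ M(m) X^m` because `N` is the first difference of `M`.
-/

open Finset PowerSeries

lemma card_Icc_neg_filter_modEq {P : ℕ} (hP : 0 < P) (v : ℤ) {m : ℤ} (hm : 0 ≤ m) :
    (#{t ∈ Icc (-m) m | t ≡ v [ZMOD P]} : ℤ) =
      ⌊(m - v) / (P : ℚ)⌋ - ⌊(-m - 1 - v) / (P : ℚ)⌋ := by
  rw [← Ioc_sub_one_left_eq_Icc, Int.Ioc_filter_modEq_card _ _ (by exact_mod_cast hP)]
  push_cast
  refine max_eq_left (sub_nonneg.mpr (Int.floor_mono ?_))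
  have : (0 : ℚ) ≤ m := by exact_mod_cast hm
  gcongr
  linarith

noncomputable def residueCount (P : ℕ) (r : ZMod P) (m : ℕ) : ℕ :=
  #{t ∈ Icc (-m : ℤ) m | ((t : ℤ) : ZMod P) = r}

noncomputable def boxCount (C : ℤ × ℤ → Prop) [DecidablePred C] (m : ℕ) : ℕ :=
  #{x ∈ Icc (-m : ℤ) m ×ˢ Icc (-m : ℤ) m | C x}

lemma sum_ncard_sphere_eq_boxCount (C : ℤ × ℤ → Prop) [DecidablePred C] (n : ℕ) :
    ∑ j ∈ range (n + 1), {x | C x ∧ max x.1.natAbs x.2.natAbs = j}.ncard = boxCount C n := by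
  rw [boxCount, card_eq_sum_card_fiberwise (f := fun x => max x.1.natAbs x.2.natAbs)
    (t := range (n + 1)) fun x hx => ?_]
  · refine sum_congr rfl fun j hj => ?_
    rw [← Set.ncard_coe_finset]
    congr 1
    ext x
    simp only [mem_range] at hj
    simp only [Set.mem_ofPred_eq, coe_filter, mem_filter, mem_product, mem_Icc]
    refine ⟨fun ⟨hC, hx⟩ => ⟨⟨?_, hC⟩, hx⟩, fun ⟨⟨_, hC⟩, hx⟩ => ⟨hC, hx⟩⟩
    omega
  · simp only [coe_filter, mem_product, mem_Icc, Set.mem_ofPred_eq] at hx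
    simp only [coe_range, Set.mem_Iio]
    omega

lemma boxCount_eq_sum_residueCount {P : ℕ} [NeZero P] (S : ZMod P × ZMod P → Prop)
    [DecidablePred S] (m : ℕ) :
    boxCount (fun x => S (x.1, x.2)) m =
      ∑ r with S r, residueCount P r.1 m * residueCount P r.2 m := by
  rw [boxCount, card_eq_sum_card_fiberwise
    (f := fun x : ℤ × ℤ => ((x.1 : ZMod P), (x.2 : ZMod P))) (t := univ.filter S)
    fun x hx => by simpa using (mem_filter.mp hx).2]
  refine sum_congr rfl fun r hr => ?_
  rw [residueCount, residueCount, ← card_product, ← filter_product, filter_filter]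
  congr 1
  refine filter_congr fun x _ => ?_
  rw [Prod.ext_iff]
  exact ⟨fun h => h.2, fun h => ⟨by simpa [h.1, h.2] using (mem_filter.mp hr).2, h⟩⟩

lemma sum_filter_add_of_periodic {α M : Type*} [AddGroup α] [Fintype α] [AddCommMonoid M]
    {S : α → Prop} [DecidablePred S] {c : α} (hS : Function.Periodic S c) (F : α → M) :
    ∑ r with S r, F (r + c) = ∑ r with S r, F r :=
  sum_equiv (Equiv.addRight c) (fun r => by simp [hS r]) fun _ _ => rfl

section HalfPeriodShift

variable {h : ℕ} [NeZero h]

lemma residueCount_add (r : ZMod (2 * h)) (m : ℕ) :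
    residueCount (2 * h) r (m + h) = residueCount (2 * h) (r + h) m + 1 := by
  obtain ⟨v, rfl⟩ := ZMod.intCast_surjective r
  have hP : 0 < 2 * h := Nat.pos_of_ne_zero (NeZero.ne _)
  have hcast : (v : ZMod (2 * h)) + h = ((v + h : ℤ) : ZMod (2 * h)) := by push_cast; rfl
  simp only [residueCount, hcast, ZMod.intCast_eq_intCast_iff]
  rw [← Nat.cast_inj (R := ℤ), Nat.cast_succ, card_Icc_neg_filter_modEq hP _ (by positivity),
    card_Icc_neg_filter_modEq hP _ (by positivity)]
  have hupper : ((((m + h : ℕ) : ℤ) : ℚ) - v) / ((2 * h : ℕ) : ℚ) =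
      ((((m : ℕ) : ℤ) : ℚ) - ((v + h : ℤ) : ℚ)) / ((2 * h : ℕ) : ℚ) + 1 := by
    field_simp
    push_cast
    ring
  have hlower : -((((m + h : ℕ) : ℤ) : ℚ)) - 1 - v =
      -((((m : ℕ) : ℤ) : ℚ)) - 1 - ((v + h : ℤ) : ℚ) := by
    push_cast
    ring
  rw [hupper, Int.floor_add_one, hlower]
  ring

lemma residueCount_add_mul (r : ZMod (2 * h)) (m k : ℕ) :
    residueCount (2 * h) r (m + k * h) =
      residueCount (2 * h) (r + k • (h : ZMod (2 * h))) m + k := by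
  induction k generalizing r with
  | zero => simp
  | succ k ih =>
    rw [add_one_mul, ← add_assoc, residueCount_add, ih, succ_nsmul]
    ac_rfl

variable (S : ZMod (2 * h) × ZMod (2 * h) → Prop) [DecidablePred S]

lemma boxCount_add_mul (hS : Function.Periodic S ((h : ZMod (2 * h)), (h : ZMod (2 * h))))
    (m k : ℕ) :
    boxCount (fun x => S (x.1, x.2)) (m + k * h) =
      boxCount (fun x => S (x.1, x.2)) m +
        k * ∑ r with S r, (residueCount (2 * h) r.1 m + residueCount (2 * h) r.2 m) +
        k ^ 2 * #{r | S r} := by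
  rw [boxCount_eq_sum_residueCount, boxCount_eq_sum_residueCount]
  simp only [residueCount_add_mul]
  refine (sum_filter_add_of_periodic (hS.nsmul k)
    fun r => (residueCount (2 * h) r.1 m + k) * (residueCount (2 * h) r.2 m + k)).trans ?_
  rw [card_eq_sum_ones, mul_sum, mul_sum, ← sum_add_distrib, ← sum_add_distrib]
  exact sum_congr rfl fun _ _ => by ring

lemma boxCount_third_difference
    (hS : Function.Periodic S ((h : ZMod (2 * h)), (h : ZMod (2 * h)))) (m : ℕ) :
    (boxCount (fun x => S (x.1, x.2)) (m + 3 * h) : ℤ) -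
        3 * boxCount (fun x => S (x.1, x.2)) (m + 2 * h) +
        3 * boxCount (fun x => S (x.1, x.2)) (m + h) - boxCount (fun x => S (x.1, x.2)) m = 0 := by
  have hone := boxCount_add_mul S hS m 1
  rw [one_mul] at hone
  rw [boxCount_add_mul S hS, boxCount_add_mul S hS, hone]
  push_cast
  ring

end HalfPeriodShift

lemma one_sub_X_mul_mk_sum_range {R : Type*} [CommRing R] (a : ℕ → R) :
    (1 - X) * PowerSeries.mk (fun n => ∑ j ∈ range (n + 1), a j) = PowerSeries.mk a := by
  ext (_ | n) <;> simp [sub_mul, coeff_succ_X_mul, sum_range_succ]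

lemma exists_polynomial_eq_one_sub_X_pow_cube_mul_mk {R : Type*} [CommRing R] {q : ℕ}
    {a : ℕ → R} (ha : ∀ n, a (n + 3 * q) - 3 * a (n + 2 * q) + 3 * a (n + q) - a n = 0) :
    ∃ p : Polynomial R, p.degree < (3 * q : ℕ) ∧
      (1 - X ^ q) ^ 3 * PowerSeries.mk a = (p : R⟦X⟧) := by
  refine ⟨trunc (3 * q) ((1 - X ^ q) ^ 3 * PowerSeries.mk a), degree_trunc_lt _ _, ?_⟩
  ext n
  rw [Polynomial.coeff_coe, coeff_trunc]
  split_ifs with hn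
  · rfl
  obtain ⟨n, rfl⟩ := Nat.exists_eq_add_of_le' (not_lt.mp hn)
  have hexp : (1 - X ^ q : R⟦X⟧) ^ 3 = 1 - C 3 * X ^ q + C 3 * X ^ (2 * q) - X ^ (3 * q) := by
    rw [map_ofNat]
    ring
  simp only [hexp, sub_mul, add_mul, one_mul, mul_assoc, map_sub, map_add, coeff_C_mul,
    coeff_X_pow_mul', coeff_mk]
  rw [if_pos (by omega), if_pos (by omega), if_pos (by omega), Nat.add_sub_cancel,
    show n + 3 * q - q = n + 2 * q by omega, show n + 3 * q - 2 * q = n + q by omega, ha]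

def latticeResidue (q : ℕ) (s₁ s₂ : ℤ) (r : ZMod (2 * q) × ZMod (2 * q)) : Prop :=
  ZMod.castHom (dvd_mul_right 2 q) (ZMod 2) (r.1 + r.2) = 0 ∧
    ZMod.castHom (dvd_mul_left q 2) (ZMod q) (r.1 * s₁ + r.2 * s₂) = 0

instance (q : ℕ) (s₁ s₂ : ℤ) : DecidablePred (latticeResidue q s₁ s₂) :=
  fun _ => instDecidableAnd

lemma latticeResidue_intCast_iff (q : ℕ) (s₁ s₂ a b : ℤ) :
    latticeResidue q s₁ s₂ ((a : ZMod (2 * q)), (b : ZMod (2 * q))) ↔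
      2 ∣ a + b ∧ (q : ℤ) ∣ a * s₁ + b * s₂ := by
  simp only [latticeResidue, ← Int.cast_add, ← Int.cast_mul, map_intCast,
    ZMod.intCast_zmod_eq_zero_iff_dvd, Nat.cast_ofNat]

lemma latticeResidue_periodic (q : ℕ) (s₁ s₂ : ℤ) :
    Function.Periodic (latticeResidue q s₁ s₂) ((q : ZMod (2 * q)), (q : ZMod (2 * q))) := by
  intro r
  have hsum : r.1 + q + (r.2 + q) = r.1 + r.2 + ((2 * q : ℕ) : ZMod (2 * q)) := by
    push_cast
    ring
  have hdot : (r.1 + q) * s₁ + (r.2 + q) * s₂ =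
      r.1 * s₁ + r.2 * s₂ + (q : ZMod (2 * q)) * (s₁ + s₂) := by
    ring
  simp only [latticeResidue, Prod.fst_add, Prod.snd_add, hsum, hdot, map_add, map_mul,
    map_natCast, ZMod.natCast_self, zero_mul, add_zero]

theorem theta_congruence_lattice_Sp2_rational_general
    (q : ℕ) (s₁ s₂ : ℤ)
    (N : ℕ → ℕ)
    (hN : ∀ k, N k = Set.ncard {p : ℤ × ℤ |
        (2 ∣ (p.1 + p.2)) ∧ ((q : ℤ) ∣ (p.1 * s₁ + p.2 * s₂)) ∧
          max p.1.natAbs p.2.natAbs = k})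
    (θ : PowerSeries ℤ) (hθ : θ = PowerSeries.mk fun k => (N k : ℤ)) :
    ∃ p : Polynomial ℤ, p.degree < (3 * q : ℕ) ∧
      (1 - PowerSeries.X ^ q) ^ 3 * θ = (1 - PowerSeries.X) * (p : PowerSeries ℤ) := by
  rcases Nat.eq_zero_or_pos q with rfl | hq
  · exact ⟨0, by simp, by simp⟩
  have : NeZero q := ⟨hq.ne'⟩
  have hpartial : ∀ n, ∑ j ∈ range (n + 1), (N j : ℤ) =
      boxCount (fun x => latticeResidue q s₁ s₂ (x.1, x.2)) n := by
    intro n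
    simp only [hN, ← and_assoc, ← latticeResidue_intCast_iff]
    exact_mod_cast sum_ncard_sphere_eq_boxCount (fun x => latticeResidue q s₁ s₂ (x.1, x.2)) n
  obtain ⟨p, hdeg, hp⟩ := exists_polynomial_eq_one_sub_X_pow_cube_mul_mk
    (a := fun n => (boxCount (fun x => latticeResidue q s₁ s₂ (x.1, x.2)) n : ℤ))
    (boxCount_third_difference _ (latticeResidue_periodic q s₁ s₂))
  refine ⟨p, hdeg, ?_⟩
  rw [hθ, ← one_sub_X_mul_mk_sum_range, funext hpartial, ← hp]
  ring

/-- **Ehrhart-type rationality of the theta function for `P¹(ℍ)` (group `Sp(2)`).**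
Let `L = D₂ ∩ L_{q,s} = {(a,b) ∈ ℤ² : a + b ≡ 0 (mod 2), a s₁ + b s₂ ≡ 0 (mod q)}` with
`gcd(q, s₁, s₂) = 1`, let `N(k) = #{(a,b) ∈ L : max(|a|,|b|) = k}` and
`θ(z) = Σ_k N(k) z^k`.  Then there is an integer polynomial `p` of degree `< 3q` with
`(1 - z^q)³ θ(z) = (1 - z) p(z)`. -/
theorem theta_congruence_lattice_Sp2_rational
    (q : ℕ) (hq : 0 < q) (s₁ s₂ : ℤ)
    (hs : Nat.gcd q (Int.gcd s₁ s₂) = 1)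
    (N : ℕ → ℕ)
    (hN : ∀ k, N k = Set.ncard {p : ℤ × ℤ |
        (2 ∣ (p.1 + p.2)) ∧ ((q : ℤ) ∣ (p.1 * s₁ + p.2 * s₂)) ∧
          max p.1.natAbs p.2.natAbs = k})
    (θ : PowerSeries ℤ) (hθ : θ = PowerSeries.mk fun k => (N k : ℤ)) :
    ∃ p : Polynomial ℤ, p.degree < (3 * q : ℕ) ∧
      (1 - PowerSeries.X ^ q) ^ 3 * θ = (1 - PowerSeries.X) * (p : PowerSeries ℤ) :=
  theta_congruence_lattice_Sp2_rational_general q s₁ s₂ N hN θ hθ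
end

section
/- Let n ≥ 1, let q be a positive integer, and let s ∈ ℤⁿ with gcd(q, s₁, …, sₙ) = 1. Define Φ(k) = #{(a₁, …, aₙ) ∈ ℤⁿ : a₁s₁ + ⋯ + aₙsₙ ≡ 0 (mod q) and |a₁| + ⋯ + |aₙ| ≤ k} for integers k ≥ 0. Then Φ is a quasipolynomial of degree n whose period divides q: there exist polynomials p₀, p₁, …, p_{q−1} with rational coefficients, each of degree at most n, such that Φ(k) = p_{k mod q}(k) for every integer k ≥ 0. -/
/-!
Write `Δ_q f (k) = f (k + q) - f k`. If `Δ_q^[d+1] f = 0`, then by the Gregory–Newton formula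
`f` restricted to each residue class `r + qℕ` is a polynomial of degree `≤ d` in `(k - r) / q`;
so it suffices to prove `Δ_q^[n+1] Φ = 0`. We do this for all the counts
`Φ_{s,u}(k) = #(L_{q,s,u} ∩ {‖a‖₁ ≤ k})` at once, by induction on `n`. Splitting off the first
coordinate `m` gives `Φ_{s,u}(k) = ∑_{|m| ≤ k} Φ_{s',u - m s₀}(k - |m|)`, whose summand depends on
`m` only modulo `q`. Hence in `Φ_{s,u}(k + q) - Φ_{s,u}(k)` the terms with `|m| ≥ q` cancel in
pairs `m ↔ m ∓ q`, and what remains is a finite sum of translates of functions `Φ_{s',u'}`, all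
killed by `Δ_q^[n]`.
-/

open Finset Polynomial fwdDiff
open scoped Nat

section ForwardDifference

variable {M G : Type*} [AddCommMonoid M] [AddCommGroup G] {h : M} {d j : ℕ}

theorem fwdDiff_iter_eq_zero_of_le {f : M → G} (hf : Δ_[h] ^[d] f = 0) (hj : d ≤ j) :
    Δ_[h] ^[j] f = 0 := by
  obtain ⟨m, rfl⟩ := Nat.exists_eq_add_of_le hj
  rw [add_comm, Function.iterate_add_apply, hf]
  exact Function.iterate_fixed (_root_.funext fun _ ↦ sub_self (0 : G)) m

variable {q : ℕ}

theorem sum_Icc_neg_add_eq_sum_range (f : ℤ → G) (K : ℕ) :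
    ∑ m ∈ Icc (-K : ℤ) K, f m + f 0 = ∑ i ∈ range (K + 1), (f i + f (-i)) := by
  induction K with
  | zero => simp
  | succ K ih =>
    rw [sum_range_succ, ← ih, Nat.cast_succ, sum_Icc_succ_eq_add_endpoints]
    abel

theorem fwdDiff_sum_range_antidiagonal (e : ℕ → ℕ → G) (he : ∀ i, e (i + q) = e i) :
    Δ_[q] (fun K ↦ ∑ i ∈ range (K + 1), e i (K - i)) =
      fun K ↦ ∑ i ∈ range q, e i (K + (q - i)) := by
  ext K
  have hhigh : ∀ i ∈ range (K + 1), e (q + i) (K + q - (q + i)) = e i (K - i) := fun i _ ↦ by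
    rw [add_comm q i, he, Nat.add_sub_add_right]
  have hlow : ∀ i ∈ range q, e i (K + q - i) = e i (K + (q - i)) := fun i hi ↦ by
    rw [Nat.add_sub_assoc (mem_range.mp hi).le]
  rw [fwdDiff, show K + q + 1 = q + (K + 1) by ring, sum_range_add,
    sum_congr rfl hhigh, sum_congr rfl hlow, add_sub_cancel_right]

theorem fwdDiff_iter_sum_range_antidiagonal_eq_zero (e : ℕ → ℕ → G) (hper : ∀ i, e (i + q) = e i)
    (he : ∀ i, Δ_[q] ^[d] (e i) = 0) :
    Δ_[q] ^[d + 1] (fun K ↦ ∑ i ∈ range (K + 1), e i (K - i)) = 0 := by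
  have hshift : (fun K ↦ ∑ i ∈ range q, e i (K + (q - i))) =
      ∑ i ∈ range q, fun K ↦ e i (K + (q - i)) := by
    ext K; rw [Finset.sum_apply]
  rw [Function.iterate_succ_apply, fwdDiff_sum_range_antidiagonal e hper, hshift,
    fwdDiff_iter_finsetSum]
  refine sum_eq_zero fun i _ ↦ funext fun K ↦ ?_
  rw [fwdDiff_iter_comp_add, he, Pi.zero_apply, Pi.zero_apply]

theorem fwdDiff_iter_sum_Icc_eq_zero (c : ℤ → ℕ → G) (hper : ∀ m, c (m + q) = c m)
    (hc : ∀ m, Δ_[q] ^[d] (c m) = 0) :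
    Δ_[q] ^[d + 1] (fun K ↦ ∑ m ∈ Icc (-K : ℤ) K, c m (K - m.natAbs)) = 0 := by
  set e : ℕ → ℕ → G := fun i ↦ c i + c (-i)
  have hsplit : (fun K : ℕ ↦ ∑ m ∈ Icc (-K : ℤ) K, c m (K - m.natAbs)) + c 0 =
      fun K ↦ ∑ i ∈ range (K + 1), e i (K - i) := by
    ext K
    simpa [e] using sum_Icc_neg_add_eq_sum_range (fun m ↦ c m (K - m.natAbs)) K
  have he_per : ∀ i, e (i + q) = e i := fun i ↦ by
    simp only [e, Nat.cast_add, hper, neg_add, ← sub_eq_add_neg]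
    rw [← hper (-i - q), sub_add_cancel]
  have he : ∀ i, Δ_[q] ^[d] (e i) = 0 := fun i ↦ by
    simp only [e, fwdDiff_iter_add, hc, add_zero]
  have hc0 : Δ_[q] ^[d + 1] (c 0) = 0 := fwdDiff_iter_eq_zero_of_le (hc 0) d.le_succ
  have := fwdDiff_iter_sum_range_antidiagonal_eq_zero e he_per he
  rwa [← hsplit, fwdDiff_iter_add, hc0, add_zero] at this

end ForwardDifference

section GregoryNewton

variable {𝕜 : Type*} [Field 𝕜] [CharZero 𝕜] {d q : ℕ}

theorem exists_polynomial_eval_of_fwdDiff_iter_eq_zero {f : ℕ → 𝕜} {h : ℕ}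
    (hf : Δ_[h] ^[d + 1] f = 0) (y : ℕ) :
    ∃ P : 𝕜[X], P.natDegree ≤ d ∧ ∀ t : ℕ, f (y + t * h) = P.eval (t : 𝕜) := by
  refine ⟨∑ j ∈ range (d + 1), C (Δ_[h] ^[j] f y / j !) * descPochhammer 𝕜 j, ?_, fun t ↦ ?_⟩
  · refine natDegree_sum_le_of_forall_le _ _ fun j hj ↦ (natDegree_C_mul_le _ _).trans ?_
    rw [descPochhammer_natDegree]
    exact Nat.lt_succ_iff.mp (mem_range.mp hj)
  set g : ℕ → 𝕜 := fun j ↦ t.choose j * Δ_[h] ^[j] f y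
  -- The Newton sum may be cut at `t + 1` (binomial coefficients vanish) or at `d + 1`
  -- (differences vanish), so the two truncations agree.
  have hstop_t : ∀ N, ∑ j ∈ range (t + 1), g j = ∑ j ∈ range (t + 1 + N), g j := fun N ↦
    sum_subset (range_subset_range.mpr (Nat.le_add_right _ _)) fun j _ hj ↦ by
      rw [mem_range, not_lt] at hj
      simp [g, Nat.choose_eq_zero_of_lt hj]
  have hstop_d : ∀ N, ∑ j ∈ range (d + 1), g j = ∑ j ∈ range (d + 1 + N), g j := fun N ↦
    sum_subset (range_subset_range.mpr (Nat.le_add_right _ _)) fun j _ hj ↦ by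
      rw [mem_range, not_lt] at hj
      simp [g, fwdDiff_iter_eq_zero_of_le hf hj]
  have heval : ∀ j, (C (Δ_[h] ^[j] f y / j !) * descPochhammer 𝕜 j).eval (t : 𝕜) = g j :=
    fun j ↦ by
      have hj : (j ! : 𝕜) ≠ 0 := Nat.cast_ne_zero.mpr j.factorial_ne_zero
      rw [eval_mul, eval_C, descPochhammer_eval_eq_descFactorial,
        Nat.descFactorial_eq_factorial_mul_choose, Nat.cast_mul]
      field_simp
      exact mul_comm _ _
  rw [← smul_eq_mul, shift_eq_sum_fwdDiff_iter h f, eval_finsetSum]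
  simp_rw [heval, nsmul_eq_mul]
  rw [hstop_d (t + 1), hstop_t (d + 1), add_comm (d + 1)]

theorem exists_quasipolynomial_of_fwdDiff_iter_eq_zero (hq : 0 < q) {f : ℕ → 𝕜}
    (hf : Δ_[q] ^[d + 1] f = 0) :
    ∃ p : Fin q → 𝕜[X], (∀ r, (p r).natDegree ≤ d) ∧
      ∀ k, f k = (p ⟨k % q, Nat.mod_lt k hq⟩).eval (k : 𝕜) := by
  choose P hPdeg hP using fun r : Fin q ↦ exists_polynomial_eval_of_fwdDiff_iter_eq_zero hf r
  refine ⟨fun r ↦ (P r).comp (C (q : 𝕜)⁻¹ * (X - C (r : 𝕜))), fun r ↦ ?_, fun k ↦ ?_⟩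
  · have hlin : (C (q : 𝕜)⁻¹ * (X - C (r : 𝕜))).natDegree ≤ 1 :=
      (natDegree_C_mul_le _ _).trans (natDegree_X_sub_C _).le
    calc _ ≤ (P r).natDegree * 1 := natDegree_comp_le.trans (Nat.mul_le_mul_left _ hlin)
      _ ≤ d := by simpa using hPdeg r
  have hk : ((k / q : ℕ) : 𝕜) = (q : 𝕜)⁻¹ * (k - (k % q : ℕ)) := by
    have hcast : (k : 𝕜) = (k % q : ℕ) + (k / q : ℕ) * q := by
      exact_mod_cast (Nat.mod_add_div' k q).symm
    rw [hcast, add_sub_cancel_left, mul_comm, mul_assoc,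
      mul_inv_cancel₀ (Nat.cast_ne_zero.mpr hq.ne'), mul_one]
  have := hP ⟨k % q, Nat.mod_lt k hq⟩ (k / q)
  rw [Nat.mod_add_div'] at this
  rw [this, eval_comp]
  simp [hk]

end GregoryNewton

section OneNormBall

variable {ι : Type*} [Fintype ι] {k : ℕ}

theorem natAbs_le_of_sum_natAbs_le {a : ι → ℤ} (ha : ∑ i, (a i).natAbs ≤ k) (i : ι) :
    (a i).natAbs ≤ k :=
  (single_le_sum (fun j _ ↦ Nat.zero_le (a j).natAbs) (mem_univ i)).trans ha

theorem finite_setOf_sum_natAbs_le (k : ℕ) : {a : ι → ℤ | ∑ i, (a i).natAbs ≤ k}.Finite := by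
  refine (Set.Finite.pi fun _ ↦ Set.finite_Icc (-k : ℤ) k).subset fun a ha i _ ↦ ?_
  have := natAbs_le_of_sum_natAbs_le ha i
  simp only [Set.mem_Icc]
  omega

end OneNormBall

section LatticeCount

variable {n : ℕ} (q : ℕ)

def latticePointsInBall (s : Fin n → ℤ) (u : ℤ) (k : ℕ) : Set (Fin n → ℤ) :=
  {a | ∑ i, a i * s i ≡ u [ZMOD q] ∧ ∑ i, (a i).natAbs ≤ k}

variable {q}

theorem latticePointsInBall_finite (s : Fin n → ℤ) (u : ℤ) (k : ℕ) :
    (latticePointsInBall q s u k).Finite :=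
  (finite_setOf_sum_natAbs_le k).subset fun _ ha ↦ ha.2

theorem latticePointsInBall_congr (s : Fin n → ℤ) {u u' : ℤ} (h : u ≡ u' [ZMOD q]) (k : ℕ) :
    latticePointsInBall q s u k = latticePointsInBall q s u' k := by
  ext a
  exact and_congr_left' ⟨fun ha ↦ ha.trans h, fun ha ↦ ha.trans h.symm⟩

theorem latticePointsInBall_fin_zero (s : Fin 0 → ℤ) (u : ℤ) (k : ℕ) :
    latticePointsInBall q s u k = latticePointsInBall q s u 0 := by
  ext a
  simp [latticePointsInBall]

theorem cons_mem_latticePointsInBall_iff (s : Fin (n + 1) → ℤ) (u : ℤ) {K : ℕ} {m : ℤ}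
    (hm : m.natAbs ≤ K) (b : Fin n → ℤ) :
    Fin.cons m b ∈ latticePointsInBall q s u K ↔
      b ∈ latticePointsInBall q (Fin.tail s) (u - m * s 0) (K - m.natAbs) := by
  simp only [latticePointsInBall, Set.mem_ofPred_eq, Fin.sum_univ_succ, Fin.cons_zero,
    Fin.cons_succ, Fin.tail, Int.modEq_iff_dvd, sub_add_eq_sub_sub]
  exact and_congr_right' (by omega)

theorem ncard_latticePointsInBall_succ (s : Fin (n + 1) → ℤ) (u : ℤ) (K : ℕ) :
    (latticePointsInBall q s u K).ncard = ∑ m ∈ Icc (-K : ℤ) K,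
      (latticePointsInBall q (Fin.tail s) (u - m * s 0) (K - m.natAbs)).ncard := by
  classical
  have hfin := latticePointsInBall_finite (q := q) s u K
  have hmaps : ∀ a ∈ hfin.toFinset, a 0 ∈ Icc (-K : ℤ) K := fun a ha ↦ by
    have := natAbs_le_of_sum_natAbs_le ((Set.Finite.mem_toFinset hfin).mp ha).2 0
    rw [mem_Icc]
    omega
  rw [Set.ncard_eq_toFinset_card _ hfin, card_eq_sum_card_fiberwise hmaps]
  refine sum_congr rfl fun m hm ↦ ?_
  have hmK : m.natAbs ≤ K := by
    rw [mem_Icc] at hm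
    omega
  rw [← Set.ncard_coe_finset, ← Set.ncard_image_of_injective
    (latticePointsInBall q (Fin.tail s) (u - m * s 0) (K - m.natAbs))
    (Fin.cons_right_injective (α := fun _ ↦ ℤ) m)]
  refine congrArg Set.ncard (Set.ext fun a ↦ ?_)
  simp only [coe_filter, Set.Finite.mem_toFinset, Set.mem_ofPred_eq, Set.mem_image]
  constructor
  · rintro ⟨ha, rfl⟩
    refine ⟨Fin.tail a, ?_, Fin.cons_self_tail a⟩
    rwa [← cons_mem_latticePointsInBall_iff s u hmK, Fin.cons_self_tail]
  · rintro ⟨b, hb, rfl⟩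
    exact ⟨(cons_mem_latticePointsInBall_iff s u hmK b).mpr hb, rfl⟩

theorem fwdDiff_iter_ncard_latticePointsInBall_eq_zero (s : Fin n → ℤ) (u : ℤ) :
    Δ_[q] ^[n + 1] (fun k ↦ ((latticePointsInBall q s u k).ncard : ℚ)) = 0 := by
  induction n generalizing u with
  | zero =>
    simp only [latticePointsInBall_fin_zero s u]
    ext
    simp [fwdDiff]
  | succ n ih =>
    simp only [ncard_latticePointsInBall_succ s u, Nat.cast_sum]
    refine fwdDiff_iter_sum_Icc_eq_zero
      (fun m k ↦ ((latticePointsInBall q (Fin.tail s) (u - m * s 0) k).ncard : ℚ))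
      (fun m ↦ ?_) (fun m ↦ ih _ _)
    have hper : u - (m + q) * s 0 ≡ u - m * s 0 [ZMOD q] := by
      rw [add_mul, ← sub_sub]
      exact Int.sub_modulus_mul_modEq_iff.mpr rfl
    simp only [latticePointsInBall_congr _ hper]

end LatticeCount

theorem counting_function_quasipolynomial_general
    (n : ℕ) (q : ℕ) (hq : 0 < q) (s : Fin n → ℤ)
    (Φ : ℕ → ℕ)
    (hΦ : ∀ k, Φ k = Set.ncard {a : Fin n → ℤ |
        (q : ℤ) ∣ (∑ i, a i * s i) ∧ (∑ i, (a i).natAbs) ≤ k}) :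
    ∃ p : Fin q → Polynomial ℚ, (∀ i, (p i).degree ≤ (n : ℕ)) ∧
      ∀ k : ℕ, (Φ k : ℚ) = (p ⟨k % q, Nat.mod_lt k hq⟩).eval (k : ℚ) := by
  obtain ⟨p, hp_deg, hp⟩ := exists_quasipolynomial_of_fwdDiff_iter_eq_zero hq
    (fwdDiff_iter_ncard_latticePointsInBall_eq_zero s 0)
  refine ⟨p, fun i ↦ degree_le_of_natDegree_le (hp_deg i), fun k ↦ ?_⟩
  rw [hΦ, ← hp]
  simp only [latticePointsInBall, Int.modEq_zero_iff_dvd]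

/-- **Quasipolynomiality of the counting function of a congruence lattice.**
Let `L_{q,s} = {a ∈ ℤⁿ : Σᵢ aᵢsᵢ ≡ 0 (mod q)}` with `gcd(q, s₁, …, sₙ) = 1` and let
`Φ(k)` be the number of points of `L_{q,s}` of one-norm at most `k`.  Then `Φ` is a
quasipolynomial of degree `n` with period dividing `q`: there are rational polynomials
`p₀, …, p_{q-1}`, each of degree at most `n`, with `Φ(k) = p_{k mod q}(k)` for all `k`. -/
theorem counting_function_quasipolynomial
    (n : ℕ) (hn : 1 ≤ n) (q : ℕ) (hq : 0 < q) (s : Fin n → ℤ)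
    (hs : Int.gcd (q : ℤ) (Finset.univ.gcd s) = 1)
    (Φ : ℕ → ℕ)
    (hΦ : ∀ k, Φ k = Set.ncard {a : Fin n → ℤ |
        (q : ℤ) ∣ (∑ i, a i * s i) ∧ (∑ i, (a i).natAbs) ≤ k}) :
    ∃ p : Fin q → Polynomial ℚ, (∀ i, (p i).degree ≤ (n : ℕ)) ∧
      ∀ k : ℕ, (Φ k : ℚ) = (p ⟨k % q, Nat.mod_lt k hq⟩).eval (k : ℚ) :=
  counting_function_quasipolynomial_general n q hq s Φ hΦ
end

section
/- Let n ≥ 1, let q be a positive integer, and let s ∈ ℤⁿ with gcd(q, s₁, …, sₙ) = 1. For k ≥ 0 let N(k) = #{(a₁, …, aₙ) ∈ ℤⁿ : a₁s₁ + ⋯ + aₙsₙ ≡ 0 (mod q) and |a₁| + ⋯ + |aₙ| = k}, and let ξ_q = exp(2πi/q). Then for every complex number z with |z| < 1, the series Σ_{k≥0} N(k) z^k converges and equals ((1 − z²)ⁿ / q) · Σ_{l=0}^{q−1} ∏_{j=1}^{n} 1 / ((z − ξ_q^{l s_j})(z − ξ_q^{−l s_j})). -/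
/-!
Orthogonality of the characters `a ↦ ξ^(l⟨a, s⟩)` writes the indicator of the lattice
`{a | q ∣ ⟨a, s⟩}` as `q⁻¹ Σ_{l<q} ξ^(l⟨a, s⟩)`. Hence `Σ_k N(k) z^k = Σ_{a ∈ L} z^‖a‖₁` is `q⁻¹`
times a sum over `l` of series over `ℤⁿ` that factor into `n` one-dimensional series
`Σ_{a ∈ ℤ} z^|a| x^a = (1 - z²) / ((1 - z x)(1 - z x⁻¹))` with `x = ξ^(l sⱼ)` on the unit circle,
which converge absolutely for `|z| < 1`.
-/

open Finset

section

variable {K : Type*} [NormedField K] {z x : K}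

theorem hasSum_pow_natAbs_mul_zpow (hz : ‖z‖ < 1) (hx : ‖x‖ = 1) :
    HasSum (fun a : ℤ => z ^ a.natAbs * x ^ a) ((1 - z ^ 2) / ((z - x) * (z - x⁻¹))) := by
  have hx0 : x ≠ 0 := norm_ne_zero_iff.mp (by rw [hx]; exact one_ne_zero)
  have hzx : ‖z * x‖ < 1 := by rwa [norm_mul, hx, mul_one]
  have hzx' : ‖z * x⁻¹‖ < 1 := by rwa [norm_mul, norm_inv, hx, inv_one, mul_one]
  have hpos : HasSum (fun n : ℕ => z ^ (n : ℤ).natAbs * x ^ (n : ℤ)) (1 - z * x)⁻¹ :=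
    (hasSum_geometric_of_norm_lt_one hzx).congr_fun fun n => by
      rw [Int.natAbs_natCast, zpow_natCast, mul_pow]
  have hneg : HasSum (fun n : ℕ => z ^ (-((n : ℤ) + 1)).natAbs * x ^ (-((n : ℤ) + 1)))
      (z * x⁻¹ * (1 - z * x⁻¹)⁻¹) :=
    ((hasSum_geometric_of_norm_lt_one hzx').mul_left (z * x⁻¹)).congr_fun fun n => by
      rw [show (-((n : ℤ) + 1)).natAbs = n + 1 by omega, ← Nat.cast_succ, zpow_neg, zpow_natCast,
        ← inv_pow, ← mul_pow, pow_succ']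
  convert HasSum.of_nat_of_neg_add_one (f := fun a : ℤ => z ^ a.natAbs * x ^ a) hpos hneg using 1
  have hzx1 : 1 - z * x ≠ 0 := sub_ne_zero.mpr fun h => by simp [← h] at hzx
  have hzx1' : 1 - z * x⁻¹ ≠ 0 := sub_ne_zero.mpr fun h => by simp [← h] at hzx'
  have hfactor : (z - x) * (z - x⁻¹) = (1 - z * x) * (1 - z * x⁻¹) := by
    linear_combination (1 - z ^ 2) * mul_inv_cancel₀ hx0
  rw [hfactor, div_eq_iff (mul_ne_zero hzx1 hzx1')]
  linear_combination -(1 - z * x⁻¹) * inv_mul_cancel₀ hzx1 -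
    z * x⁻¹ * (1 - z * x) * inv_mul_cancel₀ hzx1' + z ^ 2 * mul_inv_cancel₀ hx0

theorem summable_norm_pow_natAbs_mul_zpow (hz : ‖z‖ < 1) (hx : ‖x‖ = 1) :
    Summable fun a : ℤ => ‖z ^ a.natAbs * x ^ a‖ := by
  simp only [norm_mul, norm_pow, norm_zpow, hx, one_zpow, mul_one]
  have hgeom := summable_geometric_of_lt_one (norm_nonneg z) hz
  refine .of_nat_of_neg_add_one (hgeom.congr fun n => by simp) ?_
  exact ((summable_nat_add_iff 1).mpr hgeom).congr fun n => by
    rw [show (-((n : ℤ) + 1)).natAbs = n + 1 by omega]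

end

section

variable {R β : Type*} [NormedCommRing R]

theorem Fin.prod_consEquiv_apply {n : ℕ} (f : Fin (n + 1) → β → R) (p : β × (Fin n → β)) :
    ∏ j, f j (Fin.consEquiv (fun _ => β) p j) = f 0 p.1 * ∏ j : Fin n, f j.succ (p.2 j) := by
  simp [Fin.prod_univ_succ]

theorem summable_norm_fin_pi_prod {n : ℕ} {f : Fin n → β → R}
    (hf : ∀ j, Summable fun b => ‖f j b‖) : Summable fun a : Fin n → β => ‖∏ j, f j (a j)‖ := by
  induction n with
  | zero => exact .of_finite
  | succ n ih =>
    rw [← (Fin.consEquiv fun _ => β).summable_iff]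
    simpa only [Function.comp_def, Fin.prod_consEquiv_apply] using
      (hf 0).mul_norm (ih fun j => hf j.succ)

theorem hasSum_fin_pi_prod [CompleteSpace R] {n : ℕ} {f : Fin n → β → R} {S : Fin n → R}
    (hf : ∀ j, HasSum (f j) (S j)) (hnorm : ∀ j, Summable fun b => ‖f j b‖) :
    HasSum (fun a : Fin n → β => ∏ j, f j (a j)) (∏ j, S j) := by
  induction n with
  | zero => simp
  | succ n ih =>
    have hmul := summable_mul_of_summable_norm (R := R) (f := f 0)
      (g := fun a : Fin n → β => ∏ j : Fin n, f j.succ (a j)) (hnorm 0)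
      (summable_norm_fin_pi_prod fun j => hnorm j.succ)
    have hprod := (hf 0).mul (ih (fun j => hf j.succ) fun j => hnorm j.succ) hmul
    rw [← (Fin.consEquiv fun _ => β).hasSum_iff, Fin.prod_univ_succ]
    simpa only [Function.comp_def, Fin.prod_consEquiv_apply] using hprod

end

theorem Finset.prod_zpow_eq_zpow_sum₀ {ι G₀ : Type*} [CommGroupWithZero G₀] (s : Finset ι)
    (f : ι → ℤ) {a : G₀} (ha : a ≠ 0) : ∏ i ∈ s, a ^ f i = a ^ ∑ i ∈ s, f i := by
  induction s using Finset.cons_induction with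
  | empty => simp
  | cons i s hi ih => rw [prod_cons, sum_cons, ih, zpow_add₀ ha]

theorem IsPrimitiveRoot.sum_range_zpow_mul {K : Type*} [Field K] {ζ : K} {q : ℕ}
    (hζ : IsPrimitiveRoot ζ q) (m : ℤ) :
    ∑ l ∈ range q, ζ ^ ((l : ℤ) * m) = if (q : ℤ) ∣ m then (q : K) else 0 := by
  simp_rw [mul_comm _ m, zpow_mul, zpow_natCast]
  split_ifs with hdvd
  · simp [(hζ.zpow_eq_one_iff_dvd m).mpr hdvd]
  · have hne : ζ ^ m ≠ 1 := fun h => hdvd ((hζ.zpow_eq_one_iff_dvd m).mp h)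
    have hq : (ζ ^ m) ^ q = 1 := by
      rw [← zpow_natCast, ← zpow_mul, mul_comm, zpow_mul, zpow_natCast, hζ.pow_eq_one, one_zpow]
    rw [geom_sum_eq hne, hq, sub_self, zero_div]

theorem IsPrimitiveRoot.sum_range_prod_pow_natAbs_mul_zpow {ι K : Type*} [Fintype ι] [Field K]
    {ζ : K} {q : ℕ} (hζ : IsPrimitiveRoot ζ q) (z : K) (s a : ι → ℤ) :
    ∑ l ∈ range q, ∏ j, z ^ (a j).natAbs * (ζ ^ ((l : ℤ) * s j)) ^ a j =
      if (q : ℤ) ∣ ∑ j, a j * s j then (q : K) * z ^ ∑ j, (a j).natAbs else 0 := by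
  rcases Nat.eq_zero_or_pos q with rfl | hq
  · simp
  have hprod : ∀ l : ℕ, ∏ j, z ^ (a j).natAbs * (ζ ^ ((l : ℤ) * s j)) ^ a j =
      (z ^ ∑ j, (a j).natAbs) * ζ ^ ((l : ℤ) * ∑ j, a j * s j) := by
    intro l
    simp_rw [prod_mul_distrib, prod_pow_eq_pow_sum, ← zpow_mul,
      prod_zpow_eq_zpow_sum₀ _ _ (hζ.ne_zero hq.ne'), mul_sum, mul_assoc, mul_comm (s _)]
  simp_rw [hprod, ← mul_sum, hζ.sum_range_zpow_mul]
  split_ifs <;> ring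

theorem hasSum_ncard_mul_of_hasSum_indicator {α R : Type*} [NormedRing R] [CompleteSpace R]
    {L : Set α} {ν : α → ℕ} {c : ℕ → R} {S : R} (h : HasSum (L.indicator fun a => c (ν a)) S) :
    HasSum (fun k => ({a | a ∈ L ∧ ν a = k}.ncard : R) * c k) S := by
  refine (h.tsum_fiberwise ν).congr_fun fun k => ?_
  set T := {a | a ∈ L ∧ ν a = k}
  have hfiber :
      (ν ⁻¹' {k}).indicator (L.indicator fun a => c (ν a)) = T.indicator fun _ => c k := by
    ext a
    by_cases ha : ν a = k <;> by_cases haL : a ∈ L <;> simp [T, Set.indicator, ha, haL]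
  rw [_root_.tsum_subtype, hfiber, ← _root_.tsum_subtype, tsum_const, Nat.card_coe_set_eq,
    nsmul_eq_mul]

theorem theta_congruence_lattice_eq_sum_general
    (n : ℕ) (q : ℕ) (hq : 0 < q) (s : Fin n → ℤ)
    (N : ℕ → ℕ)
    (hN : ∀ k, N k = Set.ncard {a : Fin n → ℤ |
        (q : ℤ) ∣ (∑ i, a i * s i) ∧ (∑ i, (a i).natAbs) = k})
    (ξ : ℂ) (hξ : ξ = Complex.exp (2 * Real.pi * Complex.I / q))
    (z : ℂ) (hz : ‖z‖ < 1) :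
    HasSum (fun k : ℕ => (N k : ℂ) * z ^ k)
      ((1 - z ^ 2) ^ n / (q : ℂ) *
        ∑ l ∈ Finset.range q, ∏ j : Fin n,
          1 / ((z - ξ ^ ((l : ℤ) * s j)) * (z - ξ ^ (-((l : ℤ) * s j))))) := by
  have hprim : IsPrimitiveRoot ξ q := hξ ▸ Complex.isPrimitiveRoot_exp q hq.ne'
  have hunit (m : ℤ) : ‖ξ ^ m‖ = 1 := by rw [norm_zpow, hprim.norm'_eq_one hq.ne', one_zpow]
  have hfactors (l : ℕ) : HasSum
      (fun a : Fin n → ℤ => ∏ j, z ^ (a j).natAbs * (ξ ^ ((l : ℤ) * s j)) ^ a j)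
      (∏ j, (1 - z ^ 2) / ((z - ξ ^ ((l : ℤ) * s j)) * (z - (ξ ^ ((l : ℤ) * s j))⁻¹))) :=
    hasSum_fin_pi_prod (f := fun j (b : ℤ) => z ^ b.natAbs * (ξ ^ ((l : ℤ) * s j)) ^ b)
      (fun _ => hasSum_pow_natAbs_mul_zpow hz (hunit _))
      fun _ => summable_norm_pow_natAbs_mul_zpow hz (hunit _)
  have hlattice : HasSum
      ({a : Fin n → ℤ | (q : ℤ) ∣ ∑ i, a i * s i}.indicator fun a => z ^ ∑ i, (a i).natAbs)
      ((∑ l ∈ range q,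
        ∏ j, (1 - z ^ 2) / ((z - ξ ^ ((l : ℤ) * s j)) * (z - (ξ ^ ((l : ℤ) * s j))⁻¹))) / q) := by
    refine ((hasSum_sum fun l _ => hfactors l).div_const (q : ℂ)).congr_fun fun a => ?_
    rw [hprim.sum_range_prod_pow_natAbs_mul_zpow]
    by_cases hdvd : (q : ℤ) ∣ ∑ i, a i * s i <;> simp [hdvd, hq.ne']
  have hrhs : (1 - z ^ 2) ^ n / (q : ℂ) * ∑ l ∈ range q, ∏ j : Fin n,
        1 / ((z - ξ ^ ((l : ℤ) * s j)) * (z - ξ ^ (-((l : ℤ) * s j)))) =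
      (∑ l ∈ range q,
        ∏ j, (1 - z ^ 2) / ((z - ξ ^ ((l : ℤ) * s j)) * (z - (ξ ^ ((l : ℤ) * s j))⁻¹))) / q := by
    simp_rw [zpow_neg, div_eq_mul_one_div (1 - z ^ 2), prod_mul_distrib, prod_const, card_univ,
      Fintype.card_fin, ← mul_sum]
    ring
  rw [hrhs]
  refine (hasSum_ncard_mul_of_hasSum_indicator hlattice).congr_fun fun k => ?_
  rw [hN k]
  rfl

/-- **Zagier's formula for the generating theta function of a lens-space lattice.**
Let `N(k) = #{a ∈ ℤⁿ : Σᵢ aᵢsᵢ ≡ 0 (mod q), ‖a‖₁ = k}` with `gcd(q, s₁, …, sₙ) = 1` and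
`ξ = e^{2πi/q}`.  Then for `|z| < 1`,
`Σ_k N(k) z^k = ((1-z²)ⁿ/q) Σ_{l=0}^{q-1} Π_j 1/((z - ξ^{l sⱼ})(z - ξ^{-l sⱼ}))`. -/
theorem theta_congruence_lattice_eq_sum
    (n : ℕ) (hn : 1 ≤ n) (q : ℕ) (hq : 0 < q) (s : Fin n → ℤ)
    (hs : Int.gcd (q : ℤ) (Finset.univ.gcd s) = 1)
    (N : ℕ → ℕ)
    (hN : ∀ k, N k = Set.ncard {a : Fin n → ℤ |
        (q : ℤ) ∣ (∑ i, a i * s i) ∧ (∑ i, (a i).natAbs) = k})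
    (ξ : ℂ) (hξ : ξ = Complex.exp (2 * Real.pi * Complex.I / q))
    (z : ℂ) (hz : ‖z‖ < 1) :
    HasSum (fun k : ℕ => (N k : ℂ) * z ^ k)
      ((1 - z ^ 2) ^ n / (q : ℂ) *
        ∑ l ∈ Finset.range q, ∏ j : Fin n,
          1 / ((z - ξ ^ ((l : ℤ) * s j)) * (z - ξ ^ (-((l : ℤ) * s j))))) :=
  theta_congruence_lattice_eq_sum_general n q hq s N hN ξ hξ z hz
end

section
/- Let n ≥ 1, let q and q' be positive integers, and let s, s' ∈ ℤⁿ with gcd(q, s₁, …, sₙ) = 1 and gcd(q', s'₁, …, s'ₙ) = 1. If for every k ≥ 0 one has #{a ∈ ℤⁿ : Σᵢ aᵢsᵢ ≡ 0 (mod q), ‖a‖₁ = k} = #{a ∈ ℤⁿ : Σᵢ aᵢs'ᵢ ≡ 0 (mod q'), ‖a‖₁ = k}, then q = q'. -/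
/-!
The congruence lattice `L_{q,s}` is the kernel of a surjection `ℤⁿ → ZMod q`, so its `q` cosets
are translates of it by vectors of one-norm at most some `R`. Counting points of one-norm `≤ K`,
this gives `q · N(K) ≤ V(K + R)` and `V(K) ≤ q · N(K + R)`, where `N` counts `L_{q,s}` and `V`
counts `ℤⁿ`. Isospectrality means that `L_{q,s}` and `L_{q',s'}` have the same `N`, hence
`q · N(K) ≤ q' · N(K + c)` for a fixed shift `c`; iterating, `(q / q')ᵐ` is bounded by the
polynomial growth of `N`, so `q ≤ q'`, and symmetrically.
-/

open Finset Filter Asymptotics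

theorem le_of_eventually_pow_le_mul_pow {a b C d : ℕ}
    (h : ∀ᶠ m in atTop, a ^ m ≤ C * m ^ d * b ^ m) : a ≤ b := by
  by_contra! hba
  have hsmall : (fun m : ℕ => (C : ℝ) * (m ^ d * b ^ m)) =o[atTop] fun m => (a : ℝ) ^ m :=
    (isLittleO_pow_const_mul_const_pow_const_pow_of_norm_lt d (r₁ := (b : ℝ))
      (by simpa using hba)).const_mul_left C
  obtain ⟨m, hm, hsm⟩ := (h.and (hsmall.def one_half_pos)).exists
  have hpos : (0 : ℝ) < (a : ℝ) ^ m := pow_pos (by exact_mod_cast (Nat.zero_le b).trans_lt hba) m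
  have hm' : ((a : ℝ)) ^ m ≤ C * (m ^ d * b ^ m) := by
    rw [← mul_assoc]; exact_mod_cast hm
  rw [Real.norm_of_nonneg (by positivity), Real.norm_of_nonneg hpos.le] at hsm
  linarith

theorem pow_mul_le_pow_mul_of_mul_le_mul_add {f : ℕ → ℕ} {a b c : ℕ}
    (h : ∀ K, a * f K ≤ b * f (K + c)) (m : ℕ) : a ^ m * f 0 ≤ b ^ m * f (m * c) := by
  induction m with
  | zero => simp
  | succ m ih =>
    calc a ^ (m + 1) * f 0 = a * (a ^ m * f 0) := by ring
      _ ≤ a * (b ^ m * f (m * c)) := Nat.mul_le_mul_left a ih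
      _ = b ^ m * (a * f (m * c)) := by ring
      _ ≤ b ^ m * (b * f (m * c + c)) := Nat.mul_le_mul_left _ (h _)
      _ = b ^ (m + 1) * f ((m + 1) * c) := by ring_nf

theorem le_of_mul_le_mul_add {f : ℕ → ℕ} {a b c C d : ℕ} (hf0 : f 0 ≠ 0)
    (hf : ∀ K, f K ≤ C * (K + 1) ^ d) (h : ∀ K, a * f K ≤ b * f (K + c)) : a ≤ b := by
  refine le_of_eventually_pow_le_mul_pow (C := C * (c + 1) ^ d) (d := d) ?_
  filter_upwards [eventually_ge_atTop 1] with m hm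
  have hlin : m * c + 1 ≤ (c + 1) * m := by nlinarith
  calc a ^ m ≤ a ^ m * f 0 := Nat.le_mul_of_pos_right _ (Nat.pos_of_ne_zero hf0)
    _ ≤ b ^ m * f (m * c) := pow_mul_le_pow_mul_of_mul_le_mul_add h m
    _ ≤ b ^ m * (C * ((c + 1) * m) ^ d) :=
        Nat.mul_le_mul_left _ ((hf _).trans (Nat.mul_le_mul_left _ (Nat.pow_le_pow_left hlin d)))
    _ = C * (c + 1) ^ d * m ^ d * b ^ m := by rw [mul_pow]; ring

section OneNorm

variable {ι : Type*} [Fintype ι]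

def oneNorm (a : ι → ℤ) : ℕ := ∑ i, (a i).natAbs

theorem natAbs_le_oneNorm (a : ι → ℤ) (i : ι) : (a i).natAbs ≤ oneNorm a :=
  single_le_sum (f := fun j => (a j).natAbs) (fun _ _ => Nat.zero_le _) (mem_univ i)

@[simp] theorem oneNorm_zero : oneNorm (0 : ι → ℤ) = 0 := by simp [oneNorm]

@[simp] theorem oneNorm_neg (a : ι → ℤ) : oneNorm (-a) = oneNorm a := by simp [oneNorm]

theorem oneNorm_add_le (a b : ι → ℤ) : oneNorm (a + b) ≤ oneNorm a + oneNorm b := by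
  rw [oneNorm, oneNorm, oneNorm, ← sum_add_distrib]
  exact sum_le_sum fun i _ => Int.natAbs_add_le (a i) (b i)

variable (ι) [DecidableEq ι]

noncomputable def oneNormBall (K : ℕ) : Finset (ι → ℤ) :=
  {a ∈ Fintype.piFinset fun _ => Icc (-(K : ℤ)) K | oneNorm a ≤ K}

variable {ι}

@[simp] theorem mem_oneNormBall {K : ℕ} {a : ι → ℤ} : a ∈ oneNormBall ι K ↔ oneNorm a ≤ K := by
  refine mem_filter.trans ⟨And.right, fun h => ⟨Fintype.mem_piFinset.2 fun i => ?_, h⟩⟩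
  have := (natAbs_le_oneNorm a i).trans h
  rw [mem_Icc]
  omega

theorem card_oneNormBall_le (K : ℕ) :
    #(oneNormBall ι K) ≤ 2 ^ Fintype.card ι * (K + 1) ^ Fintype.card ι := by
  calc #(oneNormBall ι K) ≤ #(Fintype.piFinset fun _ : ι => Icc (-(K : ℤ)) K) :=
        card_filter_le _ _
    _ = (2 * K + 1) ^ Fintype.card ι := by
      simp only [Fintype.card_piFinset, Int.card_Icc, prod_const, card_univ]
      congr 1; omega
    _ ≤ (2 * (K + 1)) ^ Fintype.card ι := Nat.pow_le_pow_left (by omega) _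
    _ = 2 ^ Fintype.card ι * (K + 1) ^ Fintype.card ι := mul_pow _ _ _

theorem card_filter_oneNormBall_eq_sum_ncard (P : (ι → ℤ) → Prop) [DecidablePred P] (K : ℕ) :
    #{a ∈ oneNormBall ι K | P a} = ∑ k ∈ range (K + 1), {a | P a ∧ oneNorm a = k}.ncard := by
  rw [card_eq_sum_card_fiberwise (f := oneNorm) (t := range (K + 1))
    fun a ha => by simpa [Nat.lt_succ_iff] using (mem_filter.1 ha).1]
  refine sum_congr rfl fun k hk => ?_
  rw [← Set.ncard_coe_finset]
  congr 1
  ext a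
  simp only [filter_filter, coe_filter, mem_oneNormBall, Set.mem_ofPred_eq]
  have := mem_range_succ_iff.1 hk
  constructor
  · rintro ⟨-, hP, rfl⟩; exact ⟨hP, rfl⟩
  · rintro ⟨hP, rfl⟩; exact ⟨this, hP, rfl⟩

section Fibers

variable {G : Type*} [AddGroup G] [DecidableEq G] (φ : (ι → ℤ) →+ G)

theorem card_fiber_oneNormBall_le_add (v : G) {c : ι → ℤ} {R : ℕ} (hc : oneNorm c ≤ R) (K : ℕ) :
    #{a ∈ oneNormBall ι K | φ a = v} ≤ #{a ∈ oneNormBall ι (K + R) | φ a = v + φ c} := by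
  refine card_le_card_of_injOn (· + c) (fun a ha => ?_) (add_left_injective c).injOn
  simp only [coe_filter, mem_oneNormBall, Set.mem_ofPred_eq, map_add] at ha ⊢
  exact ⟨(oneNorm_add_le a c).trans (add_le_add ha.1 hc), by rw [ha.2]⟩

variable [Fintype G] {φ}

/-- `R` bounds the one-norm of chosen representatives of all cosets of `ker φ`; translating by
them compares each coset with `ker φ`. -/
theorem exists_card_mul_card_ker_oneNormBall_le (hφ : Function.Surjective φ) :
    ∃ R, ∀ K, Fintype.card G * #{a ∈ oneNormBall ι K | φ a = 0} ≤ #(oneNormBall ι (K + R)) ∧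
      #(oneNormBall ι K) ≤ Fintype.card G * #{a ∈ oneNormBall ι (K + R) | φ a = 0} := by
  choose c hc using hφ
  have hR : ∀ u, oneNorm (c u) ≤ univ.sup (oneNorm ∘ c) := fun u =>
    le_sup (f := oneNorm ∘ c) (mem_univ u)
  have hfib : ∀ K, #(oneNormBall ι K) = ∑ u : G, #{a ∈ oneNormBall ι K | φ a = u} := fun K =>
    card_eq_sum_card_fiberwise fun _ _ => mem_univ _
  refine ⟨univ.sup (oneNorm ∘ c), fun K => ⟨?_, ?_⟩⟩
  · rw [hfib, ← smul_eq_mul, ← card_univ, ← sum_const]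
    exact sum_le_sum fun u _ => by simpa [hc] using card_fiber_oneNormBall_le_add φ 0 (hR u) K
  · rw [hfib, ← smul_eq_mul, ← card_univ, ← sum_const]
    refine sum_le_sum fun u _ => ?_
    simpa [hc] using card_fiber_oneNormBall_le_add φ u ((oneNorm_neg (c u)).trans_le (hR u)) K

variable {H : Type*} [AddGroup H] [DecidableEq H] [Fintype H] {ψ : (ι → ℤ) →+ H}

theorem card_le_of_card_ker_oneNormBall_eq (hφ : Function.Surjective φ)
    (hψ : Function.Surjective ψ)
    (h : ∀ K, #{a ∈ oneNormBall ι K | φ a = 0} = #{a ∈ oneNormBall ι K | ψ a = 0}) :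
    Fintype.card G ≤ Fintype.card H := by
  obtain ⟨R, hR⟩ := exists_card_mul_card_ker_oneNormBall_le hφ
  obtain ⟨R', hR'⟩ := exists_card_mul_card_ker_oneNormBall_le hψ
  refine le_of_mul_le_mul_add (f := fun K => #{a ∈ oneNormBall ι K | φ a = 0}) (c := R + R')
    (C := 2 ^ Fintype.card ι) (d := Fintype.card ι) ?_ ?_ fun K => ?_
  · exact card_ne_zero.2 ⟨0, by simp⟩
  · exact fun K => (card_filter_le _ _).trans (card_oneNormBall_le K)
  · calc Fintype.card G * #{a ∈ oneNormBall ι K | φ a = 0}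
        ≤ #(oneNormBall ι (K + R)) := (hR K).1
      _ ≤ Fintype.card H * #{a ∈ oneNormBall ι (K + R + R') | ψ a = 0} := (hR' _).2
      _ = Fintype.card H * #{a ∈ oneNormBall ι (K + (R + R')) | φ a = 0} := by
        rw [h, add_assoc]

end Fibers

end OneNorm

section Congruence

variable {ι : Type*} [Fintype ι]

def congruenceForm (q : ℕ) (s : ι → ℤ) : (ι → ℤ) →+ ZMod q where
  toFun a := ((∑ i, a i * s i : ℤ) : ZMod q)
  map_zero' := by simp
  map_add' a b := by simp [add_mul, sum_add_distrib]

theorem congruenceForm_eq_zero_iff {q : ℕ} {s a : ι → ℤ} :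
    congruenceForm q s a = 0 ↔ (q : ℤ) ∣ ∑ i, a i * s i :=
  ZMod.intCast_zmod_eq_zero_iff_dvd _ _

theorem congruenceForm_surjective {q : ℕ} {s : ι → ℤ} (hs : Int.gcd q (univ.gcd s) = 1) :
    Function.Surjective (congruenceForm q s) := by
  obtain ⟨c, hc⟩ := univ.gcd_eq_sum_mul s
  obtain ⟨x, y, hxy⟩ := Int.isCoprime_iff_gcd_eq_one.2 hs
  intro u
  obtain ⟨z, rfl⟩ := ZMod.intCast_surjective u
  refine ⟨fun i => z * y * c i, ?_⟩
  have hsum : ∑ i, z * y * c i * s i = z - z * x * q := by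
    calc ∑ i, z * y * c i * s i = z * y * univ.gcd s := by
          rw [hc, mul_sum]; exact sum_congr rfl fun i _ => by ring
      _ = z - z * x * q := by linear_combination z * hxy
  change ((∑ i, z * y * c i * s i : ℤ) : ZMod q) = z
  simp [hsum]

end Congruence

theorem one_norm_isospectral_order_eq_general
    (n : ℕ) (q q' : ℕ) (hq : 0 < q) (hq' : 0 < q')
    (s s' : Fin n → ℤ)
    (hs : Int.gcd (q : ℤ) (Finset.univ.gcd s) = 1)
    (hs' : Int.gcd ((q' : ℤ)) (Finset.univ.gcd s') = 1)
    (h : ∀ k : ℕ,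
      Set.ncard {a : Fin n → ℤ | (q : ℤ) ∣ (∑ i, a i * s i) ∧ (∑ i, (a i).natAbs) = k} =
      Set.ncard {a : Fin n → ℤ | (q' : ℤ) ∣ (∑ i, a i * s' i) ∧ (∑ i, (a i).natAbs) = k}) :
    q = q' := by
  have : NeZero q := ⟨hq.ne'⟩
  have : NeZero q' := ⟨hq'.ne'⟩
  have hball : ∀ K, #{a ∈ oneNormBall (Fin n) K | congruenceForm q s a = 0} =
      #{a ∈ oneNormBall (Fin n) K | congruenceForm q' s' a = 0} := fun K => by
    simp only [congruenceForm_eq_zero_iff, card_filter_oneNormBall_eq_sum_ncard]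
    exact sum_congr rfl fun k _ => h k
  have hle := card_le_of_card_ker_oneNormBall_eq (congruenceForm_surjective hs)
    (congruenceForm_surjective hs') hball
  have hge := card_le_of_card_ker_oneNormBall_eq (congruenceForm_surjective hs')
    (congruenceForm_surjective hs) fun K => (hball K).symm
  simpa using le_antisymm hle hge

/-- **The order of the fundamental group is a spectral invariant.**
If the congruence lattices `L_{q,s}` and `L_{q',s'}` (with `gcd(q,s) = 1 = gcd(q',s')`)
are one-norm isospectral, i.e. have the same number of elements of one-norm `k` for every
`k ≥ 0`, then `q = q'`. -/
theorem one_norm_isospectral_order_eq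
    (n : ℕ) (hn : 1 ≤ n) (q q' : ℕ) (hq : 0 < q) (hq' : 0 < q')
    (s s' : Fin n → ℤ)
    (hs : Int.gcd (q : ℤ) (Finset.univ.gcd s) = 1)
    (hs' : Int.gcd ((q' : ℤ)) (Finset.univ.gcd s') = 1)
    (h : ∀ k : ℕ,
      Set.ncard {a : Fin n → ℤ | (q : ℤ) ∣ (∑ i, a i * s i) ∧ (∑ i, (a i).natAbs) = k} =
      Set.ncard {a : Fin n → ℤ | (q' : ℤ) ∣ (∑ i, a i * s' i) ∧ (∑ i, (a i).natAbs) = k}) :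
    q = q' :=
  one_norm_isospectral_order_eq_general n q q' hq hq' s s' hs hs' h
end

section
/- Let L = {(a, b) ∈ ℤ² : b ≡ 1 (mod 4)} and L' = {(a, b) ∈ ℤ² : a + 2b ≡ 1 (mod 4)}. Then L and L' are one-norm isospectral: for every integer k ≥ 0, #{(a, b) ∈ L : |a| + |b| = k} = #{(a, b) ∈ L' : |a| + |b| = k}. -/
/-- **Twisted isospectrality of `L_{4,(0,1),1}` and `L_{4,(1,2),1}`.**
The affine congruence lattices `L = {(a,b) ∈ ℤ² : b ≡ 1 (mod 4)}` and
`L' = {(a,b) ∈ ℤ² : a + 2b ≡ 1 (mod 4)}` are one-norm isospectral: they have the same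
number of elements of one-norm `k` for every `k ≥ 0`. -/
theorem one_norm_isospectral_L4_01_12 :
    ∀ k : ℕ,
      Set.ncard {p : ℤ × ℤ | Int.ModEq 4 p.2 1 ∧ p.1.natAbs + p.2.natAbs = k} =
      Set.ncard {p : ℤ × ℤ | Int.ModEq 4 (p.1 + 2 * p.2) 1 ∧ p.1.natAbs + p.2.natAbs = k} := by
  intro k
  set f : ℤ × ℤ → ℤ × ℤ := fun p => if p.1 % 2 = 0 then (p.2, p.1) else (-p.2, -p.1) with hf
  set S := {p : ℤ × ℤ | Int.ModEq 4 p.2 1 ∧ p.1.natAbs + p.2.natAbs = k} with hS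
  set T := {p : ℤ × ℤ | Int.ModEq 4 (p.1 + 2 * p.2) 1 ∧ p.1.natAbs + p.2.natAbs = k} with hT
  have himg : f '' S = T := by
    ext ⟨x, y⟩
    simp only [Set.mem_image, Set.mem_setOf_eq, hS, hT, hf, Int.ModEq, Prod.ext_iff]
    constructor
    · rintro ⟨⟨a, b⟩, ⟨hb, hn⟩, heq⟩
      by_cases h : a % 2 = 0
      · rw [if_pos h] at heq
        obtain ⟨h1, h2⟩ := heq
        dsimp only at h1 h2 hb hn
        exact ⟨by omega, by omega⟩
      · rw [if_neg h] at heq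
        obtain ⟨h1, h2⟩ := heq
        dsimp only at h1 h2 hb hn
        exact ⟨by omega, by omega⟩
    · rintro ⟨hx, hn⟩
      by_cases h : x % 4 = 1
      · refine ⟨(y, x), ⟨by omega, by omega⟩, ?_⟩
        have hy : (y, x).1 % 2 = 0 := by omega
        rw [if_pos hy]
        exact ⟨rfl, rfl⟩
      · refine ⟨(-y, -x), ⟨by omega, by omega⟩, ?_⟩
        have hy : ¬ ((-y, -x) : ℤ × ℤ).1 % 2 = 0 := by omega
        rw [if_neg hy]
        exact ⟨by simp, by simp⟩
  have hinj : Set.InjOn f S := by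
    rintro ⟨a, b⟩ ha ⟨c, d⟩ hc heq
    simp only [hS, Set.mem_setOf_eq, Int.ModEq] at ha hc
    simp only [hf] at heq
    by_cases h1 : a % 2 = 0 <;> by_cases h2 : c % 2 = 0 <;>
      simp [h1, h2, Prod.ext_iff] at heq ⊢ <;> omega
  rw [← himg, Set.ncard_image_of_injOn hinj]
end

section
/- Let q be an odd positive integer. Then the affine lattices L_{q,(1,2),1} = {(a, b) ∈ ℤ² : a + 2b ≡ 1 (mod q)} and L_{q,(1,2),2} = {(a, b) ∈ ℤ² : a + 2b ≡ 2 (mod q)} are one-norm isospectral: for every integer k ≥ 0, #{(a, b) ∈ ℤ² : a + 2b ≡ 1 (mod q), |a| + |b| = k} = #{(a, b) ∈ ℤ² : a + 2b ≡ 2 (mod q), |a| + |b| = k}. -/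
open Finset

/-- Count of `t ∈ [0,k)` with `m*t ≡ c (mod q)`. -/
def Tcnt (q : ℕ) (m c : ℤ) (k : ℕ) : ℕ :=
  ((Finset.range k).filter (fun t : ℕ => (q : ℤ) ∣ m * (t : ℤ) - c)).card

lemma Tcnt_shift (q : ℕ) (m c : ℤ) (k : ℕ) :
    Tcnt q m c k + (if (q : ℤ) ∣ c + m then 1 else 0)
      = Tcnt q m (c + m) k + (if (q : ℤ) ∣ m * ((k : ℤ) - 1) - c then 1 else 0) := by
  induction k with
  | zero =>
      have h : m * (((0 : ℕ) : ℤ) - 1) - c = -(c + m) := by push_cast; ring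
      simp only [Tcnt, Finset.range_zero, Finset.filter_empty, Finset.card_empty, h, dvd_neg]
  | succ n ih =>
      have expand : ∀ c' : ℤ, Tcnt q m c' (n + 1)
          = Tcnt q m c' n + (if (q : ℤ) ∣ m * (n : ℤ) - c' then 1 else 0) := by
        intro c'
        simp only [Tcnt, Finset.range_add_one, Finset.filter_insert]
        split_ifs with h
        · rw [Finset.card_insert_of_notMem]
          intro hmem
          exact (by simp : n ∉ Finset.range n) (Finset.mem_of_mem_filter _ hmem)
        · rfl
      rw [expand, expand]
      have hcast : (((n + 1 : ℕ) : ℤ) - 1) = (n : ℤ) := by push_cast; ring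
      rw [hcast]
      have hih : m * ((n : ℤ) - 1) - c = m * (n : ℤ) - (c + m) := by ring
      rw [hih] at ih
      split_ifs at ih ⊢ <;> omega

lemma odd_dvd_two_mul (q : ℕ) (hodd : Odd q) (x : ℤ) :
    ((q : ℤ) ∣ 2 * x) ↔ ((q : ℤ) ∣ x) := by
  constructor
  · intro h
    have hco : IsCoprime (q : ℤ) 2 := by
      rw [Int.isCoprime_iff_gcd_eq_one]
      have h2 : (2 : ℤ) = ((2 : ℕ) : ℤ) := rfl
      rw [h2, Int.gcd_natCast_natCast]
      have hq2 : q % 2 = 1 := Nat.odd_iff.mp hodd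
      rw [Nat.gcd_comm, Nat.gcd_rec, hq2]
      simp
    exact hco.dvd_of_dvd_mul_left h
  · intro h
    exact Dvd.dvd.mul_left h 2

lemma sphere_card_eq (q : ℕ) (u : ℤ) (k : ℕ) (hk : 1 ≤ k) :
    Set.ncard {p : ℤ × ℤ |
        Int.ModEq (q : ℤ) (p.1 + 2 * p.2) u ∧ p.1.natAbs + p.2.natAbs = k}
      = Tcnt q 1 (u - (k : ℤ)) k + Tcnt q 3 (2 * (k : ℤ) - u) k
        + Tcnt q 1 (-(k : ℤ) - u) k + Tcnt q 3 (2 * (k : ℤ) + u) k := by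
  classical
  set s1 := (Finset.range k).filter (fun t : ℕ => (q : ℤ) ∣ 1 * (t : ℤ) - (u - (k : ℤ))) with hs1
  set s2 := (Finset.range k).filter (fun t : ℕ => (q : ℤ) ∣ 3 * (t : ℤ) - (2 * (k : ℤ) - u)) with hs2
  set s3 := (Finset.range k).filter (fun t : ℕ => (q : ℤ) ∣ 1 * (t : ℤ) - (-(k : ℤ) - u)) with hs3
  set s4 := (Finset.range k).filter (fun t : ℕ => (q : ℤ) ∣ 3 * (t : ℤ) - (2 * (k : ℤ) + u)) with hs4
  set i1 := s1.image (fun t : ℕ => (((k : ℤ) - t, (t : ℤ)) : ℤ × ℤ)) with hi1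
  set i2 := s2.image (fun t : ℕ => ((-(t : ℤ), (k : ℤ) - t) : ℤ × ℤ)) with hi2
  set i3 := s3.image (fun t : ℕ => (((t : ℤ) - k, -(t : ℤ)) : ℤ × ℤ)) with hi3
  set i4 := s4.image (fun t : ℕ => (((t : ℤ), (t : ℤ) - k) : ℤ × ℤ)) with hi4
  have hset : {p : ℤ × ℤ |
      Int.ModEq (q : ℤ) (p.1 + 2 * p.2) u ∧ p.1.natAbs + p.2.natAbs = k}
      = ↑(i1 ∪ i2 ∪ i3 ∪ i4) := by
    ext ⟨a, b⟩
    simp only [Set.mem_setOf_eq, Finset.coe_union, Set.mem_union, Finset.mem_coe,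
      hi1, hi2, hi3, hi4, hs1, hs2, hs3, hs4, Finset.mem_image, Finset.mem_filter,
      Finset.mem_range]
    constructor
    · rintro ⟨hmod, hnorm⟩
      have hd : (q : ℤ) ∣ (a + 2 * b) - u := (Int.ModEq.dvd hmod.symm)
      by_cases h1 : 1 ≤ a ∧ 0 ≤ b
      · refine Or.inl (Or.inl (Or.inl ⟨b.toNat, ⟨by omega, ?_⟩, ?_⟩))
        · have he : 1 * ((b.toNat : ℤ)) - (u - (k : ℤ)) = (a + 2 * b) - u := by omega
          rw [he]; exact hd
        · rw [Prod.mk.injEq]; constructor <;> omega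
      by_cases h2 : a ≤ 0 ∧ 1 ≤ b
      · refine Or.inl (Or.inl (Or.inr ⟨(-a).toNat, ⟨by omega, ?_⟩, ?_⟩))
        · have he : 3 * (((-a).toNat : ℤ)) - (2 * (k : ℤ) - u) = -((a + 2 * b) - u) := by
            omega
          rw [he, dvd_neg]; exact hd
        · rw [Prod.mk.injEq]; constructor <;> omega
      by_cases h3 : a ≤ -1 ∧ b ≤ 0
      · refine Or.inl (Or.inr ⟨(-b).toNat, ⟨by omega, ?_⟩, ?_⟩)
        · have he : 1 * (((-b).toNat : ℤ)) - (-(k : ℤ) - u) = -((a + 2 * b) - u) := by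
            omega
          rw [he, dvd_neg]; exact hd
        · rw [Prod.mk.injEq]; constructor <;> omega
      · have h4 : 0 ≤ a ∧ b ≤ -1 := by omega
        refine Or.inr ⟨a.toNat, ⟨by omega, ?_⟩, ?_⟩
        · have he : 3 * ((a.toNat : ℤ)) - (2 * (k : ℤ) + u) = (a + 2 * b) - u := by omega
          rw [he]; exact hd
        · rw [Prod.mk.injEq]; constructor <;> omega
    · rintro (((⟨t, ⟨htk, hdvd⟩, heq⟩ | ⟨t, ⟨htk, hdvd⟩, heq⟩) | ⟨t, ⟨htk, hdvd⟩, heq⟩)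
        | ⟨t, ⟨htk, hdvd⟩, heq⟩) <;> rw [Prod.mk.injEq] at heq <;> obtain ⟨ha, hb⟩ := heq
      · refine ⟨Int.modEq_iff_dvd.mpr ?_, by omega⟩
        rw [show u - (a + 2 * b) = -(1 * (t : ℤ) - (u - (k : ℤ))) from by omega, dvd_neg]
        exact hdvd
      · refine ⟨Int.modEq_iff_dvd.mpr ?_, by omega⟩
        rw [show u - (a + 2 * b) = 3 * (t : ℤ) - (2 * (k : ℤ) - u) from by omega]
        exact hdvd
      · refine ⟨Int.modEq_iff_dvd.mpr ?_, by omega⟩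
        rw [show u - (a + 2 * b) = 1 * (t : ℤ) - (-(k : ℤ) - u) from by omega]
        exact hdvd
      · refine ⟨Int.modEq_iff_dvd.mpr ?_, by omega⟩
        rw [show u - (a + 2 * b) = -(3 * (t : ℤ) - (2 * (k : ℤ) + u)) from by omega, dvd_neg]
        exact hdvd
  -- sign facts for disjointness
  have mem1 : ∀ x ∈ i1, 1 ≤ x.1 ∧ 0 ≤ x.2 := by
    intro x hx
    obtain ⟨t, ht, rfl⟩ := Finset.mem_image.mp hx
    have := Finset.mem_range.mp (Finset.mem_filter.mp ht).1
    constructor <;> simp <;> omega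
  have mem2 : ∀ x ∈ i2, x.1 ≤ 0 ∧ 1 ≤ x.2 := by
    intro x hx
    obtain ⟨t, ht, rfl⟩ := Finset.mem_image.mp hx
    have := Finset.mem_range.mp (Finset.mem_filter.mp ht).1
    constructor <;> simp <;> omega
  have mem3 : ∀ x ∈ i3, x.1 ≤ -1 ∧ x.2 ≤ 0 := by
    intro x hx
    obtain ⟨t, ht, rfl⟩ := Finset.mem_image.mp hx
    have := Finset.mem_range.mp (Finset.mem_filter.mp ht).1
    constructor <;> simp <;> omega
  have mem4 : ∀ x ∈ i4, 0 ≤ x.1 ∧ x.2 ≤ -1 := by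
    intro x hx
    obtain ⟨t, ht, rfl⟩ := Finset.mem_image.mp hx
    have := Finset.mem_range.mp (Finset.mem_filter.mp ht).1
    constructor <;> simp <;> omega
  have d12 : Disjoint i1 i2 := by
    rw [Finset.disjoint_left]
    intro x hx hy
    have := mem1 x hx; have := mem2 x hy; omega
  have d123 : Disjoint (i1 ∪ i2) i3 := by
    rw [Finset.disjoint_left]
    intro x hx hy
    have h3 := mem3 x hy
    rcases Finset.mem_union.mp hx with h | h
    · have := mem1 x h; omega
    · have := mem2 x h; omega
  have d1234 : Disjoint (i1 ∪ i2 ∪ i3) i4 := by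
    rw [Finset.disjoint_left]
    intro x hx hy
    have h4 := mem4 x hy
    rcases Finset.mem_union.mp hx with h | h
    · rcases Finset.mem_union.mp h with h' | h'
      · have := mem1 x h'; omega
      · have := mem2 x h'; omega
    · have := mem3 x h; omega
  have inj1 : Function.Injective (fun t : ℕ => (((k : ℤ) - t, (t : ℤ)) : ℤ × ℤ)) := by
    intro a b h
    have := congrArg Prod.snd h
    simpa using this
  have inj2 : Function.Injective (fun t : ℕ => ((-(t : ℤ), (k : ℤ) - t) : ℤ × ℤ)) := by
    intro a b h
    have := congrArg Prod.fst h
    simpa using this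
  have inj3 : Function.Injective (fun t : ℕ => (((t : ℤ) - k, -(t : ℤ)) : ℤ × ℤ)) := by
    intro a b h
    have := congrArg Prod.snd h
    simpa using this
  have inj4 : Function.Injective (fun t : ℕ => (((t : ℤ), (t : ℤ) - k) : ℤ × ℤ)) := by
    intro a b h
    have := congrArg Prod.fst h
    simpa using this
  rw [hset, Set.ncard_coe_finset]
  rw [Finset.card_union_of_disjoint d1234, Finset.card_union_of_disjoint d123,
    Finset.card_union_of_disjoint d12]
  rw [hi1, hi2, hi3, hi4, Finset.card_image_of_injective _ inj1,
    Finset.card_image_of_injective _ inj2, Finset.card_image_of_injective _ inj3,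
    Finset.card_image_of_injective _ inj4]
  rfl

/-- **Twisted isospectrality of `L_{q,(1,2),1}` and `L_{q,(1,2),2}` for odd `q`.**
For every odd positive integer `q`, the affine congruence lattices
`{(a,b) ∈ ℤ² : a + 2b ≡ 1 (mod q)}` and `{(a,b) ∈ ℤ² : a + 2b ≡ 2 (mod q)}` are one-norm
isospectral: they have the same number of elements of one-norm `k` for every `k ≥ 0`. -/
theorem one_norm_isospectral_Lq12_u1_u2
    (q : ℕ) (hq : 0 < q) (hodd : Odd q) :
    ∀ k : ℕ,
      Set.ncard {p : ℤ × ℤ |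
          Int.ModEq (q : ℤ) (p.1 + 2 * p.2) 1 ∧ p.1.natAbs + p.2.natAbs = k} =
      Set.ncard {p : ℤ × ℤ |
          Int.ModEq (q : ℤ) (p.1 + 2 * p.2) 2 ∧ p.1.natAbs + p.2.natAbs = k} := by
  intro k
  rcases eq_or_ne q 1 with rfl | hq1
  · have hsets : {p : ℤ × ℤ |
        Int.ModEq ((1 : ℕ) : ℤ) (p.1 + 2 * p.2) 1 ∧ p.1.natAbs + p.2.natAbs = k}
        = {p : ℤ × ℤ |
        Int.ModEq ((1 : ℕ) : ℤ) (p.1 + 2 * p.2) 2 ∧ p.1.natAbs + p.2.natAbs = k} := by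
      ext p
      simp [Int.ModEq, Int.emod_one]
    rw [hsets]
  have hq3 : 3 ≤ q := by
    rcases hodd with ⟨m, rfl⟩
    omega
  rcases Nat.eq_zero_or_pos k with rfl | hk
  · have h1 : {p : ℤ × ℤ |
        Int.ModEq (q : ℤ) (p.1 + 2 * p.2) 1 ∧ p.1.natAbs + p.2.natAbs = 0}
        = (∅ : Set (ℤ × ℤ)) := by
      ext ⟨a, b⟩
      simp only [Set.mem_setOf_eq, Set.mem_empty_iff_false, iff_false, not_and]
      intro hmod hn
      have ha : a = 0 := by omega
      have hb : b = 0 := by omega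
      subst ha; subst hb
      have hd : (q : ℤ) ∣ 1 := by simpa using hmod.dvd
      have := Int.le_of_dvd (by norm_num) hd
      omega
    have h2 : {p : ℤ × ℤ |
        Int.ModEq (q : ℤ) (p.1 + 2 * p.2) 2 ∧ p.1.natAbs + p.2.natAbs = 0}
        = (∅ : Set (ℤ × ℤ)) := by
      ext ⟨a, b⟩
      simp only [Set.mem_setOf_eq, Set.mem_empty_iff_false, iff_false, not_and]
      intro hmod hn
      have ha : a = 0 := by omega
      have hb : b = 0 := by omega
      subst ha; subst hb
      have hd : (q : ℤ) ∣ 2 := by simpa using hmod.dvd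
      have := Int.le_of_dvd (by norm_num) hd
      omega
    rw [h1, h2]
  · rw [sphere_card_eq q 1 k hk, sphere_card_eq q 2 k hk]
    have h1 := Tcnt_shift q 1 (1 - (k : ℤ)) k
    have h2 := Tcnt_shift q 1 (-(k : ℤ) - 2) k
    have h3 := Tcnt_shift q 3 (2 * (k : ℤ) - 1) k
    have h4 := Tcnt_shift q 3 (2 * (k : ℤ) - 2) k
    -- normalize the integer arguments
    rw [show (1 - (k : ℤ)) + 1 = 2 - (k : ℤ) from by ring,
      show (1 : ℤ) * ((k : ℤ) - 1) - (1 - (k : ℤ)) = 2 * ((k : ℤ) - 1) from by ring] at h1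
    rw [show (-(k : ℤ) - 2) + 1 = -(k : ℤ) - 1 from by ring,
      show (1 : ℤ) * ((k : ℤ) - 1) - (-(k : ℤ) - 2) = 2 * (k : ℤ) + 1 from by ring] at h2
    rw [show (2 * (k : ℤ) - 1) + 3 = 2 * (k : ℤ) + 2 from by ring,
      show (3 : ℤ) * ((k : ℤ) - 1) - (2 * (k : ℤ) - 1) = (k : ℤ) - 2 from by ring] at h3
    rw [show (2 * (k : ℤ) - 2) + 3 = 2 * (k : ℤ) + 1 from by ring,
      show (3 : ℤ) * ((k : ℤ) - 1) - (2 * (k : ℤ) - 2) = (k : ℤ) - 1 from by ring] at h4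
    -- normalize the divisibility conditions
    have p1 : ((q : ℤ) ∣ 2 - (k : ℤ)) ↔ ((q : ℤ) ∣ (k : ℤ) - 2) := by
      constructor <;> intro h <;>
        · have := dvd_neg.mpr h
          simpa [neg_sub] using this
    have p2 : ((q : ℤ) ∣ 2 * ((k : ℤ) - 1)) ↔ ((q : ℤ) ∣ (k : ℤ) - 1) :=
      odd_dvd_two_mul q hodd _
    have p3 : ((q : ℤ) ∣ -(k : ℤ) - 1) ↔ ((q : ℤ) ∣ (k : ℤ) + 1) := by
      rw [show -(k : ℤ) - 1 = -((k : ℤ) + 1) from by ring, dvd_neg]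
    have p4 : ((q : ℤ) ∣ 2 * (k : ℤ) + 2) ↔ ((q : ℤ) ∣ (k : ℤ) + 1) := by
      rw [show 2 * (k : ℤ) + 2 = 2 * ((k : ℤ) + 1) from by ring]
      exact odd_dvd_two_mul q hodd _
    simp only [p1, p2] at h1
    simp only [p3] at h2
    simp only [p4] at h3
    -- abstract the counts
    set a1 := Tcnt q 1 (1 - (k : ℤ)) k with ha1
    set a2 := Tcnt q 3 (2 * (k : ℤ) - 1) k with ha2
    set a3 := Tcnt q 1 (-(k : ℤ) - 1) k with ha3
    set a4 := Tcnt q 3 (2 * (k : ℤ) + 1) k with ha4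
    set b1 := Tcnt q 1 (2 - (k : ℤ)) k with hb1
    set b2 := Tcnt q 3 (2 * (k : ℤ) - 2) k with hb2
    set b3 := Tcnt q 1 (-(k : ℤ) - 2) k with hb3
    set b4 := Tcnt q 3 (2 * (k : ℤ) + 2) k with hb4
    clear_value a1 a2 a3 a4 b1 b2 b3 b4
    split_ifs at h1 h2 h3 h4 <;> omega
end

section
/- The congruence lattices L = {(a, b, c) ∈ ℤ³ : a + 2b + 6c ≡ 0 (mod 15)} and L' = {(a, b, c) ∈ ℤ³ : a + 3b + 4c ≡ 0 (mod 15)} are one-norm isospectral: for every integer k ≥ 0, #{(a, b, c) ∈ L : |a| + |b| + |c| = k} = #{(a, b, c) ∈ L' : |a| + |b| + |c| = k}. -/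
/-!
Shift every coordinate of a point `p₀` of the half-open cube `[-q, q)³` away from zero by a
multiple `q * jᵢ` (`jᵢ ∈ ℕ`). This is a bijection `[-q, q)³ × ℕ³ → ℤ³` that adds
`q * (j₁ + j₂ + j₃)` to the one-norm and, for a lattice containing `qℤ³`, preserves membership.
So the number of lattice points of one-norm `n` is determined by the multiset of one-norms of the
lattice points in the cube (in generating-function terms, `F(z) = P(z) / (1 - z^q)³`). For the two
lattices of modulus `15` these two multisets of `1800` norms coincide, which is a finite computation.
-/

open Finset

namespace OneNormSpectrum

def shiftAway (q : ℕ) (a : ℤ) (j : ℕ) : ℤ := if 0 ≤ a then a + q * j else a - q * j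

section shiftAway

variable {q : ℕ}

lemma natAbs_shiftAway (a : ℤ) (j : ℕ) : (shiftAway q a j).natAbs = a.natAbs + q * j := by
  unfold shiftAway
  split_ifs <;> omega

lemma shiftAway_nonneg_iff (a : ℤ) (j : ℕ) : 0 ≤ shiftAway q a j ↔ 0 ≤ a := by
  have : (0 : ℤ) ≤ q * j := by positivity
  unfold shiftAway
  split_ifs <;> omega

lemma exists_shiftAway_eq_add_mul (q : ℕ) (a : ℤ) (j : ℕ) :
    ∃ m : ℤ, shiftAway q a j = a + q * m := by
  unfold shiftAway
  split_ifs
  exacts [⟨j, rfl⟩, ⟨-j, by ring⟩]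

lemma shiftAway_inj {a a' : ℤ} (ha : a ∈ Ico (-(q : ℤ)) q) (ha' : a' ∈ Ico (-(q : ℤ)) q)
    {j j' : ℕ} (h : shiftAway q a j = shiftAway q a' j') : a = a' ∧ j = j' := by
  rw [mem_Ico] at ha ha'
  have hsign : 0 ≤ a ↔ 0 ≤ a' := by rw [← shiftAway_nonneg_iff a j, h, shiftAway_nonneg_iff]
  obtain ⟨m, hm⟩ := exists_shiftAway_eq_add_mul q a j
  obtain ⟨m', hm'⟩ := exists_shiftAway_eq_add_mul q a' j'
  have hdvd : (q : ℤ) ∣ a - a' := ⟨m' - m, by linear_combination hm.symm.trans (h.trans hm')⟩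
  have hlt : |a - a'| < q := by rw [abs_sub_lt_iff]; constructor <;> omega
  obtain rfl : a = a' := by linarith [Int.eq_zero_of_abs_lt_dvd hdvd hlt]
  have hnorm := congrArg Int.natAbs h
  rw [natAbs_shiftAway, natAbs_shiftAway, Nat.add_left_cancel_iff] at hnorm
  exact ⟨rfl, Nat.eq_of_mul_eq_mul_left (by omega) hnorm⟩

lemma exists_shiftAway_eq (hq : 0 < q) (a : ℤ) :
    ∃ a₀ ∈ Ico (-(q : ℤ)) q, ∃ j, shiftAway q a₀ j = a := by
  have hq' : (0 : ℤ) < q := by exact_mod_cast hq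
  have hdiv := Int.emod_add_mul_ediv a q
  have hmod := Int.emod_nonneg a hq'.ne'
  have hlt := Int.emod_lt_of_pos a hq'
  rcases le_or_gt 0 a with ha | ha
  · refine ⟨a % q, by rw [mem_Ico]; omega, (a / q).toNat, ?_⟩
    rw [shiftAway, if_pos hmod, Int.toNat_of_nonneg (Int.ediv_nonneg ha hq'.le)]
    exact hdiv
  · have hneg := Int.ediv_neg_of_neg_of_pos ha hq'
    refine ⟨a % q - q, by rw [mem_Ico]; omega, (-(a / q) - 1).toNat, ?_⟩
    rw [shiftAway, if_neg (by omega), Int.toNat_of_nonneg (by omega)]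
    linear_combination hdiv

end shiftAway

def oneNorm (p : ℤ × ℤ × ℤ) : ℕ := p.1.natAbs + p.2.1.natAbs + p.2.2.natAbs

noncomputable def cube (q : ℕ) : Finset (ℤ × ℤ × ℤ) :=
  Ico (-(q : ℤ)) q ×ˢ Ico (-(q : ℤ)) q ×ˢ Ico (-(q : ℤ)) q

def shiftAway3 (q : ℕ) (x : (ℤ × ℤ × ℤ) × (ℕ × ℕ × ℕ)) : ℤ × ℤ × ℤ :=
  (shiftAway q x.1.1 x.2.1, shiftAway q x.1.2.1 x.2.2.1, shiftAway q x.1.2.2 x.2.2.2)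

section shiftAway3

variable {q : ℕ}

lemma oneNorm_shiftAway3 (x : (ℤ × ℤ × ℤ) × (ℕ × ℕ × ℕ)) :
    oneNorm (shiftAway3 q x) = oneNorm x.1 + q * (x.2.1 + x.2.2.1 + x.2.2.2) := by
  simp only [oneNorm, shiftAway3, natAbs_shiftAway]
  ring

lemma exists_shiftAway3_eq_add_smul (x : (ℤ × ℤ × ℤ) × (ℕ × ℕ × ℕ)) :
    ∃ v : ℤ × ℤ × ℤ, shiftAway3 q x = x.1 + (q : ℤ) • v := by
  obtain ⟨m₁, h₁⟩ := exists_shiftAway_eq_add_mul q x.1.1 x.2.1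
  obtain ⟨m₂, h₂⟩ := exists_shiftAway_eq_add_mul q x.1.2.1 x.2.2.1
  obtain ⟨m₃, h₃⟩ := exists_shiftAway_eq_add_mul q x.1.2.2 x.2.2.2
  exact ⟨(m₁, m₂, m₃), by simp only [shiftAway3, h₁, h₂, h₃]; rfl⟩

lemma shiftAway3_injOn : Set.InjOn (shiftAway3 q) {x | x.1 ∈ cube q} := by
  rintro ⟨⟨a, b, c⟩, j⟩ hx ⟨⟨a', b', c'⟩, j'⟩ hx' h
  simp only [Set.mem_ofPred_eq, cube, mem_product] at hx hx'
  simp only [shiftAway3, Prod.mk.injEq] at h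
  obtain ⟨rfl, h₁⟩ := shiftAway_inj hx.1 hx'.1 h.1
  obtain ⟨rfl, h₂⟩ := shiftAway_inj hx.2.1 hx'.2.1 h.2.1
  obtain ⟨rfl, h₃⟩ := shiftAway_inj hx.2.2 hx'.2.2 h.2.2
  simp [Prod.ext_iff, h₁, h₂, h₃]

lemma exists_shiftAway3_eq (hq : 0 < q) (p : ℤ × ℤ × ℤ) :
    ∃ x : (ℤ × ℤ × ℤ) × (ℕ × ℕ × ℕ), x.1 ∈ cube q ∧ shiftAway3 q x = p := by
  obtain ⟨a, ha, i, hi⟩ := exists_shiftAway_eq hq p.1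
  obtain ⟨b, hb, j, hj⟩ := exists_shiftAway_eq hq p.2.1
  obtain ⟨c, hc, k, hk⟩ := exists_shiftAway_eq hq p.2.2
  exact ⟨((a, b, c), (i, j, k)), mem_product.2 ⟨ha, mem_product.2 ⟨hb, hc⟩⟩,
    by simp only [shiftAway3, hi, hj, hk]⟩

end shiftAway3

noncomputable def cubeNorms (q : ℕ) (Q : ℤ × ℤ × ℤ → Prop) [DecidablePred Q] : Multiset ℕ :=
  ((cube q).filter Q).val.map oneNorm

theorem ncard_sphere_eq_sum {q : ℕ} (hq : 0 < q) {Q : ℤ × ℤ × ℤ → Prop} [DecidablePred Q]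
    (hQ : ∀ p v : ℤ × ℤ × ℤ, Q (p + (q : ℤ) • v) ↔ Q p) (n : ℕ) :
    {p | Q p ∧ oneNorm p = n}.ncard =
      ∑ j ∈ range (n + 1) ×ˢ range (n + 1) ×ˢ range (n + 1),
        (cubeNorms q Q).countP (· + q * (j.1 + j.2.1 + j.2.2) = n) := by
  set J := range (n + 1) ×ˢ range (n + 1) ×ˢ range (n + 1)
  set T := ((cube q).filter Q ×ˢ J).filter (fun x => oneNorm (shiftAway3 q x) = n)
  have hQ_shift (x : (ℤ × ℤ × ℤ) × (ℕ × ℕ × ℕ)) : Q (shiftAway3 q x) ↔ Q x.1 := by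
    obtain ⟨v, hv⟩ := exists_shiftAway3_eq_add_smul (q := q) x
    rw [hv, hQ]
  have himage : {p | Q p ∧ oneNorm p = n} = T.image (shiftAway3 q) := by
    ext p
    simp only [Set.mem_ofPred_eq, coe_image, Set.mem_image, mem_coe, T, J, mem_filter,
      mem_product, mem_range]
    constructor
    · rintro ⟨hQp, hp⟩
      obtain ⟨x, hx, rfl⟩ := exists_shiftAway3_eq hq p
      have hj : x.2.1 + x.2.2.1 + x.2.2.2 ≤ n := by
        rw [oneNorm_shiftAway3] at hp
        exact (Nat.le_mul_of_pos_left _ hq).trans (hp ▸ Nat.le_add_left _ _)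
      exact ⟨x, ⟨⟨⟨hx, (hQ_shift x).1 hQp⟩, by omega, by omega, by omega⟩, hp⟩, rfl⟩
    · rintro ⟨x, ⟨⟨⟨-, hQx⟩, -⟩, hn⟩, rfl⟩
      exact ⟨(hQ_shift x).2 hQx, hn⟩
  rw [himage, Set.ncard_coe_finset, card_image_of_injOn, card_filter, sum_product_right]
  · refine sum_congr rfl fun j _ => ?_
    rw [cubeNorms, Multiset.countP_map, ← filter_val, card_val, card_filter]
    simp only [oneNorm_shiftAway3]
  · refine shiftAway3_injOn.mono fun x hx => ?_
    simp only [T, coe_filter, mem_filter, mem_product] at hx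
    exact hx.1.1.1

theorem ncard_sphere_eq_of_cubeNorms_eq {q : ℕ} (hq : 0 < q) {Q Q' : ℤ × ℤ × ℤ → Prop}
    [DecidablePred Q] [DecidablePred Q'] (hQ : ∀ p v : ℤ × ℤ × ℤ, Q (p + (q : ℤ) • v) ↔ Q p)
    (hQ' : ∀ p v : ℤ × ℤ × ℤ, Q' (p + (q : ℤ) • v) ↔ Q' p) (h : cubeNorms q Q = cubeNorms q Q')
    (n : ℕ) : {p | Q p ∧ oneNorm p = n}.ncard = {p | Q' p ∧ oneNorm p = n}.ncard := by
  rw [ncard_sphere_eq_sum hq hQ, ncard_sphere_eq_sum hq hQ', h]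

lemma dvd_add_smul_iff (m s t : ℤ) (p v : ℤ × ℤ × ℤ) :
    m ∣ (p + m • v).1 + s * (p + m • v).2.1 + t * (p + m • v).2.2 ↔
      m ∣ p.1 + s * p.2.1 + t * p.2.2 := by
  have hsum : (p + m • v).1 + s * (p + m • v).2.1 + t * (p + m • v).2.2 =
      p.1 + s * p.2.1 + t * p.2.2 + m * (v.1 + s * v.2.1 + t * v.2.2) := by
    simp only [Prod.fst_add, Prod.snd_add, Prod.smul_fst, Prod.smul_snd, smul_eq_mul]
    ring
  rw [hsum, dvd_add_left (dvd_mul_right _ _)]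

lemma cubeNorms_126_eq_134 :
    cubeNorms 15 (fun p => (15 : ℤ) ∣ p.1 + 2 * p.2.1 + 6 * p.2.2) =
      cubeNorms 15 (fun p => (15 : ℤ) ∣ p.1 + 3 * p.2.1 + 4 * p.2.2) := by
  decide +kernel

end OneNormSpectrum

/-- **The isospectral pair of 5-dimensional orbifold lens spaces `L(15;1,2,6)`, `L(15;1,3,4)`.**
The congruence lattices `{(a,b,c) ∈ ℤ³ : a + 2b + 6c ≡ 0 (mod 15)}` and
`{(a,b,c) ∈ ℤ³ : a + 3b + 4c ≡ 0 (mod 15)}` are one-norm isospectral: they have the same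
number of elements of one-norm `k` for every `k ≥ 0`. -/
theorem one_norm_isospectral_L15_126_134 :
    ∀ k : ℕ,
      Set.ncard {p : ℤ × ℤ × ℤ | (15 : ℤ) ∣ (p.1 + 2 * p.2.1 + 6 * p.2.2) ∧
          p.1.natAbs + p.2.1.natAbs + p.2.2.natAbs = k} =
      Set.ncard {p : ℤ × ℤ × ℤ | (15 : ℤ) ∣ (p.1 + 3 * p.2.1 + 4 * p.2.2) ∧
          p.1.natAbs + p.2.1.natAbs + p.2.2.natAbs = k} :=
  OneNormSpectrum.ncard_sphere_eq_of_cubeNorms_eq (by norm_num)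
    (OneNormSpectrum.dvd_add_smul_iff 15 2 6) (OneNormSpectrum.dvd_add_smul_iff 15 3 4)
    OneNormSpectrum.cubeNorms_126_eq_134
end

section
/- Let A₂ = {(a, b, c) ∈ ℤ³ : a + b + c = 0}. For every integer u, the affine lattices L*_u = {(a, b, c) ∈ A₂ : b + 5c ≡ u (mod 6)} and L'*_u = {(a, b, c) ∈ A₂ : a + 2b + 3c ≡ u (mod 6)} are one-norm isospectral: for every integer k ≥ 0, #{μ ∈ L*_u : ‖μ‖₁ = k} = #{μ ∈ L'*_u : ‖μ‖₁ = k}, where ‖(a,b,c)‖₁ = |a| + |b| + |c|. -/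
/-- **Twisted isospectrality of `L*_{6,(0,1,5),u}` and `L*_{6,(1,2,3),u}` in `A₂`.**
For every integer `u`, the affine lattices
`{(a,b,c) ∈ ℤ³ : a + b + c = 0, b + 5c ≡ u (mod 6)}` and
`{(a,b,c) ∈ ℤ³ : a + b + c = 0, a + 2b + 3c ≡ u (mod 6)}` are one-norm isospectral: they
have the same number of elements of one-norm `k` for every `k ≥ 0`. -/
theorem one_norm_isospectral_A2_L6 (u : ℤ) :
    ∀ k : ℕ,
      Set.ncard {p : ℤ × ℤ × ℤ | p.1 + p.2.1 + p.2.2 = 0 ∧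
          Int.ModEq 6 (p.2.1 + 5 * p.2.2) u ∧
          p.1.natAbs + p.2.1.natAbs + p.2.2.natAbs = k} =
      Set.ncard {p : ℤ × ℤ × ℤ | p.1 + p.2.1 + p.2.2 = 0 ∧
          Int.ModEq 6 (p.1 + 2 * p.2.1 + 3 * p.2.2) u ∧
          p.1.natAbs + p.2.1.natAbs + p.2.2.natAbs = k} := by
  intro k
  have hinj : Function.Injective (fun p : ℤ × ℤ × ℤ => (p.2.2, p.1, p.2.1)) := by
    rintro ⟨a, b, c⟩ ⟨a', b', c'⟩ h
    simp only [Prod.mk.injEq] at h ⊢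
    tauto
  have himg : (fun p : ℤ × ℤ × ℤ => (p.2.2, p.1, p.2.1)) ''
      {p : ℤ × ℤ × ℤ | p.1 + p.2.1 + p.2.2 = 0 ∧
          Int.ModEq 6 (p.2.1 + 5 * p.2.2) u ∧
          p.1.natAbs + p.2.1.natAbs + p.2.2.natAbs = k} =
      {p : ℤ × ℤ × ℤ | p.1 + p.2.1 + p.2.2 = 0 ∧
          Int.ModEq 6 (p.1 + 2 * p.2.1 + 3 * p.2.2) u ∧
          p.1.natAbs + p.2.1.natAbs + p.2.2.natAbs = k} := by
    ext ⟨x, y, z⟩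
    simp only [Set.mem_image, Set.mem_setOf_eq, Prod.mk.injEq, Prod.exists, Int.ModEq]
    constructor
    · rintro ⟨a, b, c, ⟨h1, h2, h3⟩, hx, hy, hz⟩
      refine ⟨by omega, ?_, by omega⟩
      omega
    · rintro ⟨h1, h2, h3⟩
      exact ⟨y, z, x, ⟨by omega, by omega, by omega⟩, rfl, rfl, rfl⟩
  rw [← himg, Set.ncard_image_of_injective _ hinj]
end

section
/- Let L = {(a, b) ∈ ℤ² : a + b ≡ 0 (mod 2) and b ≡ 0 (mod 4)} and L' = {(a, b) ∈ ℤ² : a + b ≡ 0 (mod 2) and a + 2b ≡ 0 (mod 4)}. Then L = ℤ(0,4) ⊕ ℤ(2,0), L' = ℤ(4,0) ⊕ ℤ(0,2), and L and L' are maximum-norm isospectral: for every integer k ≥ 0, #{(a, b) ∈ L : max(|a|, |b|) = k} = #{(a, b) ∈ L' : max(|a|, |b|) = k}. -/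
/-- **The isospectral pair of 4-dimensional orbifolds covered by `P¹(ℍ)` with `q = 4`.**
Let `L = D₂ ∩ L_{4,(0,1)} = {(a,b) ∈ ℤ² : a + b ≡ 0 (mod 2), b ≡ 0 (mod 4)}` and
`L' = D₂ ∩ L_{4,(1,2)} = {(a,b) ∈ ℤ² : a + b ≡ 0 (mod 2), a + 2b ≡ 0 (mod 4)}`.  Then
`L = ℤ(0,4) ⊕ ℤ(2,0)`, `L' = ℤ(4,0) ⊕ ℤ(0,2)`, and `L` and `L'` are maximum-norm
isospectral: they have the same number of elements of maximum norm `k` for every `k ≥ 0`. -/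
theorem max_norm_isospectral_P1H_q4 :
    ({p : ℤ × ℤ | 2 ∣ (p.1 + p.2) ∧ 4 ∣ p.2} =
        {p : ℤ × ℤ | ∃ m l : ℤ, p = m • ((0, 4) : ℤ × ℤ) + l • ((2, 0) : ℤ × ℤ)}) ∧
    ({p : ℤ × ℤ | 2 ∣ (p.1 + p.2) ∧ 4 ∣ (p.1 + 2 * p.2)} =
        {p : ℤ × ℤ | ∃ m l : ℤ, p = m • ((4, 0) : ℤ × ℤ) + l • ((0, 2) : ℤ × ℤ)}) ∧
    ∀ k : ℕ,
      Set.ncard {p : ℤ × ℤ | (2 ∣ (p.1 + p.2) ∧ 4 ∣ p.2) ∧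
          max p.1.natAbs p.2.natAbs = k} =
      Set.ncard {p : ℤ × ℤ | (2 ∣ (p.1 + p.2) ∧ 4 ∣ (p.1 + 2 * p.2)) ∧
          max p.1.natAbs p.2.natAbs = k} := by
  refine ⟨?_, ?_, ?_⟩
  · ext ⟨a, b⟩
    simp only [Set.mem_setOf_eq, Prod.smul_mk, smul_eq_mul, Prod.mk_add_mk, Prod.mk.injEq]
    constructor
    · rintro ⟨h1, h2⟩
      exact ⟨b / 4, a / 2, by omega, by omega⟩
    · rintro ⟨m, l, h1, h2⟩
      constructor <;> omega
  · ext ⟨a, b⟩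
    simp only [Set.mem_setOf_eq, Prod.smul_mk, smul_eq_mul, Prod.mk_add_mk, Prod.mk.injEq]
    constructor
    · rintro ⟨h1, h2⟩
      exact ⟨a / 4, b / 2, by omega, by omega⟩
    · rintro ⟨m, l, h1, h2⟩
      constructor <;> omega
  · intro k
    have hs : {p : ℤ × ℤ | (2 ∣ (p.1 + p.2) ∧ 4 ∣ p.2) ∧
          max p.1.natAbs p.2.natAbs = k} =
        Prod.swap '' {p : ℤ × ℤ | (2 ∣ (p.1 + p.2) ∧ 4 ∣ (p.1 + 2 * p.2)) ∧
          max p.1.natAbs p.2.natAbs = k} := by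
      rw [Set.image_swap_eq_preimage_swap]
      ext ⟨a, b⟩
      simp only [Set.mem_setOf_eq, Set.mem_preimage, Prod.swap_prod_mk]
      constructor
      · rintro ⟨⟨h1, h2⟩, h3⟩
        exact ⟨⟨by omega, by omega⟩, by rw [Nat.max_comm]; exact h3⟩
      · rintro ⟨⟨h1, h2⟩, h3⟩
        exact ⟨⟨by omega, by omega⟩, by rw [Nat.max_comm]; exact h3⟩
    rw [hs, Set.ncard_image_of_injective _ Prod.swap_injective]
end
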